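/- arXiv:2605.25562 — 6 statements merged into one kernel-verified Lean document; each statement's English description precedes it below -/
import Mathlib

section
/- Let L > 0 and let γ : ℝ → ℝ² be an L-periodic unit-speed C² parametrisation of a simple closed curve: γ is twice continuously differentiable, γ(s+L) = γ(s) for all s, ‖γ'(s)‖ = 1 for all s, γ is injective on [0,L), and κ_max := sup_s ‖γ''(s)‖ is finite. Then there exists a constant c ∈ (0,1] such that for all s, t ∈ [0,L]: c · d_Γ(s,t) ≤ ‖γ(s) − γ(t)‖ ≤ d_Γ(s,t), where d_Γ(s,t) := min(|s−t|, L−|s−t|). -/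
/-!
A unit-speed curve is `1`-Lipschitz; applied to `s` and to `t` or `t ± L`, this gives the upper
bound. For the lower bound, bounded curvature makes the tangent `K`-Lipschitz, so over an arc of
length at most `1/K` it stays within distance `1` (an angle of at most `π/3`) of its initial
direction, and the chord is at least half the arc. Away from the diagonal, the chord is bounded
below by a positive constant by compactness, because injectivity on `[0, L)` forces `γ s ≠ γ t`
whenever `d_Γ(s, t) > 0`.
-/

open Set Function RealInnerProductSpace NNReal

lemma lipschitzWith_of_norm_deriv_le {E : Type*} [NormedAddCommGroup E] [NormedSpace ℝ E]
    {f : ℝ → E} (hf : Differentiable ℝ f) {B : ℝ} (hB : ∀ s, ‖deriv f s‖ ≤ B) :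
    LipschitzWith B.toNNReal f :=
  lipschitzWith_of_nnnorm_deriv_le hf fun s => by
    simpa [← NNReal.coe_le_coe] using (hB s).trans (le_max_left B 0)

def periodicDist (L s t : ℝ) : ℝ := min |s - t| (L - |s - t|)

lemma periodicDist_le_half (L s t : ℝ) : periodicDist L s t ≤ L / 2 := by
  rcases le_total |s - t| (L / 2) with h | h
  · exact (min_le_left _ _).trans h
  · exact (min_le_right _ _).trans (by linarith)

lemma periodicDist_nonneg {L s t : ℝ} (h : |s - t| ≤ L) : 0 ≤ periodicDist L s t :=
  le_min (abs_nonneg _) (sub_nonneg.2 h)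

lemma continuous_periodicDist (L : ℝ) : Continuous fun p : ℝ × ℝ => periodicDist L p.1 p.2 := by
  unfold periodicDist; fun_prop

namespace Function.Periodic

section

variable {α : Type*} {f : ℝ → α} {L : ℝ}

lemma exists_abs_sub_eq_sub_abs_sub (hper : Periodic f L) {s t : ℝ} (hst : |s - t| ≤ L) :
    ∃ t', f t' = f t ∧ |s - t'| = L - |s - t| := by
  rcases le_total t s with hts | hst'
  · refine ⟨t + L, hper t, ?_⟩
    rw [abs_of_nonneg (sub_nonneg.2 hts)] at hst ⊢
    rw [abs_of_nonpos (by linarith)]; ring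
  · refine ⟨t - L, hper.sub_eq t, ?_⟩
    rw [abs_of_nonpos (sub_nonpos.2 hst')] at hst ⊢
    rw [abs_of_nonneg (by linarith)]; ring

lemma periodicDist_eq_zero_of_apply_eq (hL : 0 < L) (hper : Periodic f L)
    (hinj : InjOn f (Ico 0 L)) {s t : ℝ} (hst : |s - t| ≤ L) (h : f s = f t) :
    periodicDist L s t = 0 := by
  have hmod : ∀ x, f (toIcoMod hL 0 x) = f x := fun x => hper.sub_zsmul_eq _
  obtain ⟨n, hn⟩ := (toIcoMod_eq_toIcoMod hL).1 <|
    hinj (toIcoMod_mem_Ico' hL s) (toIcoMod_mem_Ico' hL t) (by rw [hmod, hmod, h])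
  have habs : |s - t| = |(n : ℝ)| * L := by
    rw [abs_sub_comm, hn, zsmul_eq_mul, abs_mul, abs_of_pos hL]
  have hn1 : |n| ≤ 1 := by
    have : |(n : ℝ)| ≤ 1 := le_of_mul_le_mul_right (by linarith) hL
    exact_mod_cast this
  obtain ⟨hn_lo, hn_hi⟩ := abs_le.1 hn1
  interval_cases n <;> simp [periodicDist, habs, hL.le]

end

section

variable {F : Type*} [NormedAddCommGroup F] {f : ℝ → F} {L : ℝ}

lemma norm_sub_le_periodicDist (hper : Periodic f L) (hlip : LipschitzWith 1 f) {s t : ℝ}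
    (hst : |s - t| ≤ L) : ‖f s - f t‖ ≤ periodicDist L s t := by
  have hlip' : ∀ a b, ‖f a - f b‖ ≤ |a - b| := fun a b => by
    simpa using hlip.norm_sub_le a b
  obtain ⟨t', ht', hdist⟩ := hper.exists_abs_sub_eq_sub_abs_sub hst
  refine le_min (hlip' s t) ?_
  rw [← ht', ← hdist]
  exact hlip' s t'

lemma exists_pos_le_norm_sub_of_le_periodicDist (hL : 0 < L) (hper : Periodic f L)
    (hf : Continuous f) (hinj : InjOn f (Ico 0 L)) {δ : ℝ} (hδ : 0 < δ) :
    ∃ m > 0, ∀ s ∈ Icc 0 L, ∀ t ∈ Icc 0 L, δ ≤ periodicDist L s t → m ≤ ‖f s - f t‖ := by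
  set S := (Icc 0 L ×ˢ Icc 0 L) ∩ {p : ℝ × ℝ | δ ≤ periodicDist L p.1 p.2}
  have hS : IsCompact S := (isCompact_Icc.prod isCompact_Icc).inter_right
    (isClosed_le continuous_const (continuous_periodicDist L))
  have hpos : ∀ p ∈ S, 0 < ‖f p.1 - f p.2‖ := by
    rintro ⟨s, t⟩ ⟨⟨hs, ht⟩, hst⟩
    refine norm_sub_pos_iff.2 fun h => ?_
    have := hper.periodicDist_eq_zero_of_apply_eq hL hinj
      (abs_sub_le_of_nonneg_of_le hs.1 hs.2 ht.1 ht.2) h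
    exact hδ.not_ge (this ▸ hst)
  obtain ⟨m, hm, hmS⟩ := hS.exists_forall_le' (by fun_prop) hpos
  exact ⟨m, hm, fun s hs t ht hst => hmS (s, t) ⟨⟨hs, ht⟩, hst⟩⟩

end

end Function.Periodic

section

variable {E : Type*} [NormedAddCommGroup E] [InnerProductSpace ℝ E] {γ : ℝ → E}

lemma one_half_le_inner_of_norm_sub_le_one {a b : E} (ha : ‖a‖ = 1) (hb : ‖b‖ = 1)
    (h : ‖a - b‖ ≤ 1) : 1 / 2 ≤ ⟪a, b⟫ := by
  have hsq := norm_sub_sq_real a b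
  rw [ha, hb] at hsq
  nlinarith [norm_nonneg (a - b)]

lemma half_sub_le_norm_sub {K : ℝ≥0} (hγ : Differentiable ℝ γ) (hunit : ∀ s, ‖deriv γ s‖ = 1)
    (hK : LipschitzWith K (deriv γ)) {s t : ℝ} (hts : t ≤ s) (hst : K * (s - t) ≤ 1) :
    (s - t) / 2 ≤ ‖γ s - γ t‖ := by
  set v := deriv γ t
  have hderiv : ∀ u, HasDerivAt (fun w => ⟪γ w, v⟫) ⟪deriv γ u, v⟫ u := fun u => by
    simpa using (hγ u).hasDerivAt.inner ℝ (hasDerivAt_const u v)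
  have hslope : ∀ u ∈ interior (Icc t s), 1 / 2 ≤ deriv (fun w => ⟪γ w, v⟫) u := by
    intro u hu
    rw [interior_Icc] at hu
    rw [(hderiv u).deriv]
    refine one_half_le_inner_of_norm_sub_le_one (hunit u) (hunit t) ?_
    calc ‖deriv γ u - v‖ ≤ K * ‖u - t‖ := hK.norm_sub_le u t
      _ ≤ K * (s - t) := by
          rw [Real.norm_of_nonneg (by linarith [hu.1])]
          exact mul_le_mul_of_nonneg_left (by linarith [hu.2]) K.2
      _ ≤ 1 := hst
  have hmvt := (convex_Icc t s).mul_sub_le_image_sub_of_le_deriv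
    (fun u _ => (hderiv u).continuousAt.continuousWithinAt)
    (fun u _ => (hderiv u).differentiableAt.differentiableWithinAt) hslope
    t (left_mem_Icc.2 hts) s (right_mem_Icc.2 hts) hts
  calc (s - t) / 2 = 1 / 2 * (s - t) := by ring
    _ ≤ ⟪γ s - γ t, v⟫ := by rwa [inner_sub_left]
    _ ≤ ‖γ s - γ t‖ := by simpa [v, hunit t] using real_inner_le_norm (γ s - γ t) v

lemma abs_sub_div_two_le_norm_sub {K : ℝ≥0} (hγ : Differentiable ℝ γ)
    (hunit : ∀ s, ‖deriv γ s‖ = 1) (hK : LipschitzWith K (deriv γ)) {s t : ℝ}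
    (hst : K * |s - t| ≤ 1) : |s - t| / 2 ≤ ‖γ s - γ t‖ := by
  rcases le_total t s with hts | hst'
  · rw [abs_of_nonneg (sub_nonneg.2 hts)] at hst ⊢
    exact half_sub_le_norm_sub hγ hunit hK hts hst
  · rw [abs_sub_comm, abs_of_nonneg (sub_nonneg.2 hst')] at hst ⊢
    rw [norm_sub_rev]
    exact half_sub_le_norm_sub hγ hunit hK hst' hst

lemma Function.Periodic.periodicDist_div_two_le_norm_sub {L : ℝ} {K : ℝ≥0}
    (hper : Periodic γ L) (hγ : Differentiable ℝ γ) (hunit : ∀ s, ‖deriv γ s‖ = 1)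
    (hK : LipschitzWith K (deriv γ)) {s t : ℝ} (hst : |s - t| ≤ L)
    (hclose : K * periodicDist L s t ≤ 1) : periodicDist L s t / 2 ≤ ‖γ s - γ t‖ := by
  rcases min_choice |s - t| (L - |s - t|) with h | h <;>
    rw [periodicDist, h] at hclose ⊢
  · exact abs_sub_div_two_le_norm_sub hγ hunit hK hclose
  · obtain ⟨t', ht', hdist⟩ := hper.exists_abs_sub_eq_sub_abs_sub hst
    rw [← hdist] at hclose ⊢
    rw [← ht']
    exact abs_sub_div_two_le_norm_sub hγ hunit hK hclose

lemma Function.Periodic.exists_pos_mul_periodicDist_le_norm_sub {L : ℝ} {K : ℝ≥0} (hL : 0 < L)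
    (hper : Periodic γ L) (hγ : Differentiable ℝ γ) (hunit : ∀ s, ‖deriv γ s‖ = 1)
    (hK : LipschitzWith K (deriv γ)) (hinj : InjOn γ (Ico 0 L)) :
    ∃ c > 0, ∀ s ∈ Icc 0 L, ∀ t ∈ Icc 0 L, c * periodicDist L s t ≤ ‖γ s - γ t‖ := by
  set δ : ℝ := (K + 1)⁻¹
  have hδ : 0 < δ := by positivity
  obtain ⟨m, hm, hfar⟩ := hper.exists_pos_le_norm_sub_of_le_periodicDist hL hγ.continuous hinj hδ
  refine ⟨min (1 / 2) (2 * m / L), by positivity, fun s hs t ht => ?_⟩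
  have hst : |s - t| ≤ L := abs_sub_le_of_nonneg_of_le hs.1 hs.2 ht.1 ht.2
  have hd := periodicDist_nonneg hst
  rcases le_total (periodicDist L s t) δ with hnear | hδd
  · have hclose : K * periodicDist L s t ≤ 1 :=
      calc K * periodicDist L s t ≤ K * δ := mul_le_mul_of_nonneg_left hnear K.2
        _ ≤ 1 := by rw [← div_eq_mul_inv, div_le_one (by positivity)]; linarith
    calc min (1 / 2) (2 * m / L) * periodicDist L s t ≤ 1 / 2 * periodicDist L s t :=
          mul_le_mul_of_nonneg_right (min_le_left _ _) hd
      _ = periodicDist L s t / 2 := by ring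
      _ ≤ ‖γ s - γ t‖ := hper.periodicDist_div_two_le_norm_sub hγ hunit hK hst hclose
  · calc min (1 / 2) (2 * m / L) * periodicDist L s t ≤ 2 * m / L * (L / 2) :=
          mul_le_mul (min_le_right _ _) (periodicDist_le_half L s t) hd (by positivity)
      _ = m := by field_simp
      _ ≤ ‖γ s - γ t‖ := hfar s hs t ht hδd

end

/-- Chord-arc equivalence for a simple closed C² curve parametrised by arc length. -/
theorem chord_arc_equivalence
    (L : ℝ) (hL : 0 < L)
    (γ : ℝ → EuclideanSpace ℝ (Fin 2))
    (hsmooth : ContDiff ℝ 2 γ)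
    (hper : ∀ s : ℝ, γ (s + L) = γ s)
    (hunit : ∀ s : ℝ, ‖deriv γ s‖ = 1)
    (hinj : Set.InjOn γ (Set.Ico 0 L))
    (hκ : BddAbove (Set.range fun s => ‖deriv (deriv γ) s‖)) :
    ∃ c : ℝ, c ∈ Set.Ioc (0 : ℝ) 1 ∧
      ∀ s ∈ Set.Icc (0 : ℝ) L, ∀ t ∈ Set.Icc (0 : ℝ) L,
        c * min |s - t| (L - |s - t|) ≤ ‖γ s - γ t‖ ∧
        ‖γ s - γ t‖ ≤ min |s - t| (L - |s - t|) := by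
  have hγ : Differentiable ℝ γ := hsmooth.differentiable (by norm_num)
  have hlip : LipschitzWith 1 γ := by
    simpa using lipschitzWith_of_norm_deriv_le hγ fun s => (hunit s).le
  obtain ⟨B, hB⟩ := hκ
  have hK : LipschitzWith B.toNNReal (deriv γ) :=
    lipschitzWith_of_norm_deriv_le hsmooth.differentiable_deriv_two fun s => hB ⟨s, rfl⟩
  obtain ⟨c, hc, hlower⟩ :=
    Periodic.exists_pos_mul_periodicDist_le_norm_sub hL hper hγ hunit hK hinj
  refine ⟨min c 1, ⟨lt_min hc one_pos, min_le_right _ _⟩, fun s hs t ht => ?_⟩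
  have hst : |s - t| ≤ L := abs_sub_le_of_nonneg_of_le hs.1 hs.2 ht.1 ht.2
  exact ⟨(mul_le_mul_of_nonneg_right (min_le_left _ _) (periodicDist_nonneg hst)).trans
    (hlower s hs t ht), Periodic.norm_sub_le_periodicDist hper hlip hst⟩
end

section
/- Let γ : ℝ → ℝ² be twice continuously differentiable with ‖γ'(s)‖ = 1 for all s and ‖γ''(s)‖ ≤ κ for all s, where κ > 0. Then for all s, t ∈ ℝ with |s − t| ≤ 1/(2κ): ‖γ(s) − γ(t)‖ ≥ (3/4)·|s − t|. -/
open Set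

/-!
Compare `γ` with its tangent line at the midpoint `m` of `[t, s]`. The curvature bound makes
`γ'` `κ`-Lipschitz, so `γ'(u)` stays within `κ |s - t| / 2` of the unit vector `γ'(m)` on `[t, s]`,
and the mean value inequality gives `‖γ s - γ t - (s - t) γ'(m)‖ ≤ κ |s - t|² / 2 ≤ |s - t| / 4`.
-/

lemma abs_sub_midpoint_le_of_mem_uIcc {a b x : ℝ} (hx : x ∈ uIcc a b) :
    |x - (a + b) / 2| ≤ |a - b| / 2 := by
  rcases mem_uIcc.1 hx with ⟨hax, hxb⟩ | ⟨hbx, hxa⟩ <;>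
    rw [abs_le] <;> constructor <;> cases abs_cases (a - b) <;> linarith

lemma norm_sub_sub_smul_deriv_midpoint_le {E : Type*} [NormedAddCommGroup E] [NormedSpace ℝ E]
    {f : ℝ → E} {K : NNReal} (hf : Differentiable ℝ f) (hf' : LipschitzWith K (deriv f))
    (s t : ℝ) : ‖f s - f t - (s - t) • deriv f ((s + t) / 2)‖ ≤ K / 2 * |s - t| ^ 2 := by
  set v := deriv f ((s + t) / 2)
  have hderiv (x : ℝ) : HasDerivAt (fun u => f u - u • v) (deriv f x - v) x :=
    (hf x).hasDerivAt.sub (by simpa using (hasDerivAt_id x).smul_const v)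
  have hbound (x : ℝ) (hx : x ∈ uIcc t s) : ‖deriv f x - v‖ ≤ K * (|s - t| / 2) := by
    calc ‖deriv f x - v‖ ≤ K * |x - (s + t) / 2| := by
          simpa [dist_eq_norm, Real.dist_eq] using hf'.dist_le_mul x ((s + t) / 2)
      _ ≤ K * (|s - t| / 2) := by
          gcongr
          simpa [add_comm, abs_sub_comm] using abs_sub_midpoint_le_of_mem_uIcc hx
  have hmvt := (convex_uIcc t s).norm_image_sub_le_of_norm_hasDerivWithin_le
    (fun x _ => (hderiv x).hasDerivWithinAt) hbound left_mem_uIcc right_mem_uIcc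
  calc ‖f s - f t - (s - t) • v‖ = ‖(f s - s • v) - (f t - t • v)‖ := by
        rw [sub_smul]; abel_nf
    _ ≤ K * (|s - t| / 2) * ‖s - t‖ := hmvt
    _ = K / 2 * |s - t| ^ 2 := by rw [Real.norm_eq_abs]; ring

/-- Local chord-arc bound: for arc-length separation at most 1/(2κ),
the chord is at least 3/4 of the arc. -/
theorem chord_local_lower_bound
    (γ : ℝ → EuclideanSpace ℝ (Fin 2)) (κ : ℝ) (hκ : 0 < κ)
    (hsmooth : ContDiff ℝ 2 γ)
    (hunit : ∀ s : ℝ, ‖deriv γ s‖ = 1)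
    (hcurv : ∀ s : ℝ, ‖deriv (deriv γ) s‖ ≤ κ) :
    ∀ s t : ℝ, |s - t| ≤ 1 / (2 * κ) → 3 / 4 * |s - t| ≤ ‖γ s - γ t‖ := by
  intro s t hst
  set v := deriv γ ((s + t) / 2)
  have hlip : LipschitzWith κ.toNNReal (deriv γ) :=
    lipschitzWith_of_nnnorm_deriv_le hsmooth.differentiable_deriv_two fun x => by
      rw [← NNReal.coe_le_coe, coe_nnnorm, Real.coe_toNNReal κ hκ.le]
      exact hcurv x
  have htangent : ‖γ s - γ t - (s - t) • v‖ ≤ κ / 2 * |s - t| ^ 2 := by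
    simpa [Real.coe_toNNReal κ hκ.le] using
      norm_sub_sub_smul_deriv_midpoint_le (hsmooth.differentiable (by norm_num)) hlip s t
  have hv : ‖(s - t) • v‖ = |s - t| := by rw [norm_smul, hunit, Real.norm_eq_abs, mul_one]
  have hshort : κ * |s - t| ≤ 1 / 2 := by
    rw [le_div_iff₀ (by positivity)] at hst
    linarith
  calc 3 / 4 * |s - t| ≤ |s - t| - κ / 2 * |s - t| ^ 2 := by
        nlinarith [mul_le_mul_of_nonneg_right hshort (abs_nonneg (s - t))]
    _ ≤ ‖(s - t) • v‖ - ‖γ s - γ t - (s - t) • v‖ := by rw [hv]; linarith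
    _ ≤ ‖γ s - γ t‖ := by linarith [norm_le_norm_add_norm_sub (γ s - γ t) ((s - t) • v)]
end

section
/- Let (Ω, P) be a probability space, S a measurable space, and z₁, …, z_m : Ω → S independent identically distributed random variables with m ≥ 2. Let K : S × S → ℝ be a bounded measurable symmetric kernel with K(x,x) = 0 for all x. Define T := m^{−2} Σ_{i≠j} K(z_i, z_j) and ζ₁ := Var(E[K(z₁, z₂) | z₁]) (the variance of the conditional expectation x ↦ E[K(x, z₂)] evaluated at z₁). Then Var(T) = (2(m−1)·Var(K(z₁,z₂)) + 4(m−1)(m−2)·ζ₁) / m³. -/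
/-!
Expand `Var T` as `m⁻⁴ ∑ cov(K(zᵢ, zⱼ), K(zₖ, zₗ))` over off-diagonal pairs `(i, j)`, `(k, l)`.
Such a covariance is `Var K(z₁, z₂)` when `{i, j} = {k, l}`, is `ζ₁` when the two pairs share
exactly one index (integrate out the two unshared samples), and vanishes for disjoint pairs by
independence. For each of the `m(m-1)` pairs `(i, j)` there are `2` pairs `(k, l)` of the first
kind and `4(m-2)` of the second.
-/

open MeasureTheory ProbabilityTheory

section Kernel

variable {S : Type*} [MeasurableSpace S] {K : S → S → ℝ} {C : ℝ}

lemma memLp_kernel_comp {Ω : Type*} [MeasurableSpace Ω] {P : Measure Ω} [IsFiniteMeasure P]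
    (hK : Measurable fun p : S × S => K p.1 p.2) (hC : ∀ x y, |K x y| ≤ C)
    {X Y : Ω → S} (hX : AEMeasurable X P) (hY : AEMeasurable Y P) (p : ENNReal) :
    MemLp (fun ω => K (X ω) (Y ω)) p P :=
  .of_bound (hK.comp_aemeasurable (hX.prodMk hY)).aestronglyMeasurable C
    (ae_of_all _ fun _ => (Real.norm_eq_abs _).trans_le (hC _ _))

variable {μ : Measure S} [IsProbabilityMeasure μ]

lemma memLp_integral_kernel (hK : Measurable fun p : S × S => K p.1 p.2)
    (hC : ∀ x y, |K x y| ≤ C) (p : ENNReal) :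
    MemLp (fun x => ∫ y, K x y ∂μ) p μ := by
  refine .of_bound hK.stronglyMeasurable.integral_prod_right'.aestronglyMeasurable C
    (ae_of_all _ fun x => ?_)
  simpa using norm_integral_le_of_norm_le_const (μ := μ)
    (ae_of_all _ fun y => (Real.norm_eq_abs (K x y)).trans_le (hC x y))

lemma covariance_kernel_prod_prod_eq_variance_integral
    (hK : Measurable fun p : S × S => K p.1 p.2) (hC : ∀ x y, |K x y| ≤ C) :
    cov[fun q : S × S × S => K q.1 q.2.1, fun q => K q.1 q.2.2; μ.prod (μ.prod μ)]
      = Var[fun x => ∫ y, K x y ∂μ; μ] := by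
  have hL : ∀ {X Y : S × S × S → S}, Measurable X → Measurable Y →
      MemLp (fun q => K (X q) (Y q)) 2 (μ.prod (μ.prod μ)) := fun hX hY =>
    memLp_kernel_comp hK hC hX.aemeasurable hY.aemeasurable 2
  have h₁ := hL (X := Prod.fst) (Y := fun q => q.2.1) (by fun_prop) (by fun_prop)
  have h₂ := hL (X := Prod.fst) (Y := fun q => q.2.2) (by fun_prop) (by fun_prop)
  rw [covariance_eq_sub h₁ h₂, variance_eq_sub (memLp_integral_kernel hK hC 2)]
  have hsq : ∫ q : S × S × S, K q.1 q.2.1 * K q.1 q.2.2 ∂μ.prod (μ.prod μ)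
      = ∫ x, (∫ y, K x y ∂μ) ^ 2 ∂μ := by
    rw [integral_prod (fun q : S × S × S => K q.1 q.2.1 * K q.1 q.2.2) (h₁.integrable_mul h₂)]
    simp [integral_prod_mul, sq]
  have hfst : ∫ q : S × S × S, K q.1 q.2.1 ∂μ.prod (μ.prod μ) = ∫ x, ∫ y, K x y ∂μ ∂μ := by
    rw [integral_prod _ (h₁.integrable one_le_two)]
    simp [integral_fun_fst]
  have hsnd : ∫ q : S × S × S, K q.1 q.2.2 ∂μ.prod (μ.prod μ) = ∫ x, ∫ y, K x y ∂μ ∂μ := by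
    rw [integral_prod _ (h₂.integrable one_le_two)]
    simp [integral_fun_snd]
  simp only [Pi.mul_apply, Pi.pow_apply, hsq, hfst, hsnd]
  ring

end Kernel

lemma variance_const_mul_sum_sum {Ω ι κ : Type*} [MeasurableSpace Ω] {P : Measure Ω}
    [IsFiniteMeasure P] [Fintype ι] [Fintype κ] {X : ι → κ → Ω → ℝ}
    (hX : ∀ i j, MemLp (X i j) 2 P) (c : ℝ) :
    Var[fun ω => c * ∑ i, ∑ j, X i j ω; P]
      = c ^ 2 * ∑ i, ∑ j, ∑ k, ∑ l, cov[X i j, X k l; P] := by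
  rw [variance_const_mul, variance_fun_sum fun i => memLp_finsetSum _ fun j _ => hX i j]
  simp_rw [covariance_fun_sum_fun_sum (hX _) (hX _)]
  exact congrArg _ (Finset.sum_congr rfl fun i _ => Finset.sum_comm)

section Overlap

variable {ι : Type*} [DecidableEq ι]

/-- With `a = ζ₁` and `b = Var K(z₁, z₂) - 2ζ₁` this is `cov(K(zᵢ, zⱼ), K(zₖ, zₗ))` for `i ≠ j`,
`k ≠ l`: it is `Var K(z₁, z₂)` if `{i, j} = {k, l}`, `ζ₁` if the pairs share one index, else `0`. -/
def overlapCoeff (a b : ℝ) (i j k l : ι) : ℝ :=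
  a * ((if i = k then 1 else 0) + (if i = l then 1 else 0) + (if j = k then 1 else 0)
      + (if j = l then 1 else 0))
    + b * ((if i = k ∧ j = l then 1 else 0) + (if i = l ∧ j = k then 1 else 0))

lemma sum_sum_ite_eq_sub_sum_diag {M : Type*} [AddCommGroup M] [Fintype ι] (f : ι → ι → M) :
    ∑ k, ∑ l, (if k = l then 0 else f k l) = ∑ k, ∑ l, f k l - ∑ k, f k k := by
  have h : ∀ k l, (if k = l then 0 else f k l) = f k l - if k = l then f k l else 0 := by
    intro k l; split_ifs <;> simp
  simp [h, Finset.sum_sub_distrib]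

lemma sum_offDiag_overlapCoeff [Fintype ι] (a b : ℝ) :
    ∑ i : ι, ∑ j : ι, ∑ k : ι, ∑ l : ι,
      (if i = j ∨ k = l then 0 else overlapCoeff a b i j k l)
      = Fintype.card ι * (Fintype.card ι - 1) * (4 * (Fintype.card ι - 1) * a + 2 * b) := by
  have hrow : ∀ i j : ι, i ≠ j →
      ∑ k : ι, ∑ l : ι, (if k = l then 0 else overlapCoeff a b i j k l)
        = 4 * (Fintype.card ι - 1) * a + 2 * b := fun i j hij => by
    rw [sum_sum_ite_eq_sub_sum_diag]
    simp [overlapCoeff, Finset.sum_add_distrib, ← Finset.mul_sum, ite_and, hij.symm]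
    ring
  calc _ = ∑ i : ι, ∑ j : ι, (if i = j then 0 else 4 * (Fintype.card ι - 1) * a + 2 * b) := by
        refine Finset.sum_congr rfl fun i _ => Finset.sum_congr rfl fun j _ => ?_
        by_cases hij : i = j
        · simp [hij]
        · simp only [hij, false_or, if_false]
          exact hrow i j hij
    _ = _ := by
        rw [sum_sum_ite_eq_sub_sum_diag]
        simp
        ring

end Overlap

section IID

variable {Ω S ι : Type*} [MeasurableSpace Ω] {P : Measure Ω} [IsProbabilityMeasure P]
  [MeasurableSpace S] {μ : Measure S} {z : ι → Ω → S}

lemma map_prodMk_eq_prod (hz : ∀ i, AEMeasurable (z i) P) (hindep : iIndepFun z P)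
    (hlaw : ∀ i, P.map (z i) = μ) {i j : ι} (hij : i ≠ j) :
    P.map (fun ω => (z i ω, z j ω)) = μ.prod μ := by
  rw [(indepFun_iff_map_prod_eq_prod_map_map (hz i) (hz j)).1 (hindep.indepFun hij), hlaw, hlaw]

lemma map_prodMk_prodMk_eq_prod (hz : ∀ i, AEMeasurable (z i) P) (hindep : iIndepFun z P)
    (hlaw : ∀ i, P.map (z i) = μ) {a b c : ι} (hab : a ≠ b) (hac : a ≠ c) (hbc : b ≠ c) :
    P.map (fun ω => (z a ω, z b ω, z c ω)) = μ.prod (μ.prod μ) := by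
  rw [(indepFun_iff_map_prod_eq_prod_map_map (hz a) ((hz b).prodMk (hz c))).1
      (hindep.indepFun_prodMk₀ hz b c a hab.symm hac.symm).symm,
    hlaw, map_prodMk_eq_prod hz hindep hlaw hbc]

variable {K : S → S → ℝ} {C : ℝ}

lemma covariance_kernel_eq_zero (hK : Measurable fun p : S × S => K p.1 p.2)
    (hC : ∀ x y, |K x y| ≤ C) (hz : ∀ i, AEMeasurable (z i) P) (hindep : iIndepFun z P)
    {i j k l : ι} (hik : i ≠ k) (hil : i ≠ l) (hjk : j ≠ k) (hjl : j ≠ l) :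
    cov[fun ω => K (z i ω) (z j ω), fun ω => K (z k ω) (z l ω); P] = 0 :=
  ((hindep.indepFun_prodMk_prodMk₀ hz i j k l hik hil hjk hjl).comp hK hK).covariance_eq_zero
    (memLp_kernel_comp hK hC (hz i) (hz j) 2) (memLp_kernel_comp hK hC (hz k) (hz l) 2)

lemma variance_kernel_eq_variance_prod (hK : Measurable fun p : S × S => K p.1 p.2)
    (hz : ∀ i, AEMeasurable (z i) P) (hindep : iIndepFun z P) (hlaw : ∀ i, P.map (z i) = μ)
    {i j : ι} (hij : i ≠ j) :
    Var[fun ω => K (z i ω) (z j ω); P] = Var[fun p : S × S => K p.1 p.2; μ.prod μ] := by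
  rw [← map_prodMk_eq_prod hz hindep hlaw hij,
    variance_map hK.aemeasurable ((hz i).prodMk (hz j))]
  rfl

lemma covariance_kernel_eq_variance_integral (hK : Measurable fun p : S × S => K p.1 p.2)
    (hC : ∀ x y, |K x y| ≤ C) (hz : ∀ i, AEMeasurable (z i) P) (hindep : iIndepFun z P)
    (hlaw : ∀ i, P.map (z i) = μ) {a b c : ι} (hab : a ≠ b) (hac : a ≠ c) (hbc : b ≠ c) :
    cov[fun ω => K (z a ω) (z b ω), fun ω => K (z a ω) (z c ω); P]
      = Var[fun x => ∫ y, K x y ∂μ; μ] := by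
  have : IsProbabilityMeasure μ := hlaw a ▸ Measure.isProbabilityMeasure_map (hz a)
  rw [← covariance_kernel_prod_prod_eq_variance_integral hK hC,
    ← map_prodMk_prodMk_eq_prod hz hindep hlaw hab hac hbc]
  exact (covariance_map_fun (X := fun q : S × S × S => K q.1 q.2.1) (Y := fun q => K q.1 q.2.2)
    (hK.comp (measurable_fst.prodMk measurable_snd.fst)).aestronglyMeasurable
    (hK.comp (measurable_fst.prodMk measurable_snd.snd)).aestronglyMeasurable
    ((hz a).prodMk ((hz b).prodMk (hz c)))).symm

lemma variance_integral_kernel_eq (hK : Measurable fun p : S × S => K p.1 p.2)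
    (hz : ∀ i, AEMeasurable (z i) P) (hlaw : ∀ i, P.map (z i) = μ) (i j : ι) :
    Var[fun ω => ∫ ω', K (z i ω) (z j ω') ∂P; P] = Var[fun x => ∫ y, K x y ∂μ; μ] := by
  have hsec : ∀ x, ∫ ω', K x (z j ω') ∂P = ∫ y, K x y ∂μ := fun x => by
    rw [← hlaw j]
    exact (integral_map (hz j) (hK.comp measurable_prodMk_left).aestronglyMeasurable).symm
  simp_rw [hsec]
  rw [← hlaw i, variance_map hK.stronglyMeasurable.integral_prod_right'.aemeasurable (hz i)]
  rfl

lemma covariance_kernel_eq_overlapCoeff [DecidableEq ι]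
    (hK : Measurable fun p : S × S => K p.1 p.2) (hC : ∀ x y, |K x y| ≤ C)
    (hKsymm : ∀ x y, K x y = K y x) (hz : ∀ i, AEMeasurable (z i) P) (hindep : iIndepFun z P)
    (hlaw : ∀ i, P.map (z i) = μ) {i j k l : ι} (hij : i ≠ j) (hkl : k ≠ l) :
    cov[fun ω => K (z i ω) (z j ω), fun ω => K (z k ω) (z l ω); P]
      = overlapCoeff Var[fun x => ∫ y, K x y ∂μ; μ]
          (Var[fun p : S × S => K p.1 p.2; μ.prod μ] - 2 * Var[fun x => ∫ y, K x y ∂μ; μ])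
          i j k l := by
  have hswap : ∀ a b, (fun ω => K (z a ω) (z b ω)) = fun ω => K (z b ω) (z a ω) :=
    fun a b => funext fun ω => hKsymm _ _
  have hvar : ∀ {a b}, a ≠ b → cov[fun ω => K (z a ω) (z b ω), fun ω => K (z a ω) (z b ω); P]
      = Var[fun p : S × S => K p.1 p.2; μ.prod μ] := fun {a b} hab => by
    rw [covariance_self (X := fun ω => K (z a ω) (z b ω))
        (hK.comp_aemeasurable ((hz a).prodMk (hz b))),
      variance_kernel_eq_variance_prod hK hz hindep hlaw hab]
  have hone {a b c : ι} (hab : a ≠ b) (hac : a ≠ c) (hbc : b ≠ c) :=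
    covariance_kernel_eq_variance_integral hK hC hz hindep hlaw hab hac hbc
  rcases eq_or_ne i k with rfl | hik
  · rcases eq_or_ne j l with rfl | hjl
    · rw [hvar hij]; simp [overlapCoeff, hij, hij.symm]; ring
    · rw [hone hij hkl hjl]; simp [overlapCoeff, hkl, hjl, hij.symm]
  rcases eq_or_ne i l with rfl | hil
  · rcases eq_or_ne j k with rfl | hjk
    · rw [hswap j i, hvar hij]; simp [overlapCoeff, hij, hij.symm]; ring
    · rw [hswap k i, hone hij hkl.symm hjk]; simp [overlapCoeff, hik, hjk, hij.symm]
  rcases eq_or_ne j k with rfl | hjk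
  · rw [hswap i j, hone hij.symm hkl hil]; simp [overlapCoeff, hij, hil, hkl]
  rcases eq_or_ne j l with rfl | hjl
  · rw [hswap i j, hswap k j, hone hij.symm hkl.symm hik]
    simp [overlapCoeff, hij, hik, hkl.symm]
  rw [covariance_kernel_eq_zero hK hC hz hindep hik hil hjk hjl]
  simp [overlapCoeff, hik, hil, hjk, hjl]

lemma covariance_ite_kernel_eq_overlapCoeff [DecidableEq ι]
    (hK : Measurable fun p : S × S => K p.1 p.2) (hC : ∀ x y, |K x y| ≤ C)
    (hKsymm : ∀ x y, K x y = K y x) (hz : ∀ i, AEMeasurable (z i) P) (hindep : iIndepFun z P)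
    (hlaw : ∀ i, P.map (z i) = μ) (i j k l : ι) :
    cov[fun ω => if i = j then 0 else K (z i ω) (z j ω),
        fun ω => if k = l then 0 else K (z k ω) (z l ω); P]
      = if i = j ∨ k = l then 0 else
          overlapCoeff Var[fun x => ∫ y, K x y ∂μ; μ]
            (Var[fun p : S × S => K p.1 p.2; μ.prod μ] - 2 * Var[fun x => ∫ y, K x y ∂μ; μ])
            i j k l := by
  by_cases hij : i = j
  · simp [hij, covariance_const_left]
  by_cases hkl : k = l
  · simp [hkl, covariance_const_right]
  simp only [hij, hkl, or_self, if_false]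
  exact covariance_kernel_eq_overlapCoeff hK hC hKsymm hz hindep hlaw hij hkl

end IID

/-- Hoeffding decomposition of the variance of the V-statistic of a symmetric
kernel vanishing on the diagonal, built from i.i.d. samples. -/
theorem vstatistic_variance_formula
    {Ω S : Type*} [MeasureSpace Ω] [IsProbabilityMeasure (ℙ : Measure Ω)]
    [MeasurableSpace S]
    (m : ℕ) (hm : 2 ≤ m) (z : Fin m → Ω → S)
    (hindep : iIndepFun z ℙ)
    (hident : ∀ i j, IdentDistrib (z i) (z j) ℙ ℙ)
    (K : S → S → ℝ)
    (hKmeas : Measurable fun p : S × S => K p.1 p.2)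
    (hKbdd : ∃ C : ℝ, ∀ x y, |K x y| ≤ C)
    (hKsymm : ∀ x y, K x y = K y x) :
    variance (fun ω => ((m : ℝ) ^ 2)⁻¹ *
        ∑ i : Fin m, ∑ j : Fin m, if i = j then 0 else K (z i ω) (z j ω)) ℙ
      = (2 * ((m : ℝ) - 1) *
            variance (fun ω => K (z ⟨0, by omega⟩ ω) (z ⟨1, by omega⟩ ω)) ℙ
          + 4 * ((m : ℝ) - 1) * ((m : ℝ) - 2) *
            variance (fun ω => ∫ ω', K (z ⟨0, by omega⟩ ω) (z ⟨1, by omega⟩ ω') ∂ℙ) ℙ)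
        / (m : ℝ) ^ 3 := by
  obtain ⟨C, hC⟩ := hKbdd
  have hz : ∀ i, AEMeasurable (z i) ℙ := fun i => (hident i i).aemeasurable_fst
  have hlaw : ∀ i, Measure.map (z i) ℙ = Measure.map (z ⟨0, by omega⟩) ℙ :=
    fun i => (hident i _).map_eq
  have hsummand : ∀ i j, MemLp (fun ω => if i = j then 0 else K (z i ω) (z j ω)) 2 ℙ :=
    fun i j => by
      split_ifs
      exacts [memLp_const 0, memLp_kernel_comp hKmeas hC (hz i) (hz j) 2]
  rw [variance_const_mul_sum_sum hsummand,
    variance_kernel_eq_variance_prod hKmeas hz hindep hlaw (by simp [Fin.ext_iff]),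
    variance_integral_kernel_eq hKmeas hz hlaw]
  simp only [covariance_ite_kernel_eq_overlapCoeff hKmeas hC hKsymm hz hindep hlaw]
  rw [sum_offDiag_overlapCoeff, Fintype.card_fin]
  field_simp
  ring
end

section
/- Let L > 0, c ∈ (0,1], M ≥ 0. Let γ : ℝ → ℝ² satisfy c · d_Γ(s,t) ≤ ‖γ(s) − γ(t)‖ ≤ d_Γ(s,t) for all s, t ∈ [0,L], with γ(s) ≠ γ(t) whenever d_Γ(s,t) > 0, where d_Γ(s,t) := min(|s−t|, L−|s−t|). Let G : ℝ → ℝ be differentiable and L-periodic with |G'(s)| ≤ M for all s. Let K(s,t) := |G(s)−G(t)|²/‖γ(s)−γ(t)‖² for γ(s) ≠ γ(t) and K(s,t) := 0 otherwise, set I := ∫₀^L ∫₀^L K(s,t) ds dt, and let s₁, …, s_m be independent random variables each uniformly distributed on [0,L], with m ≥ 2. Define T := m^{−2} Σ_{i≠j} K(s_i, s_j). Then for every δ ∈ (0,1), with probability at least 1 − δ: |L²·T − I| ≤ 3 L² M² c^{−2} (mδ)^{−1/2}. -/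
/-!
By the mean value theorem and periodicity, `|G s - G t| ≤ M d_Γ(s,t)`, while the chord-arc bound
gives `‖γ s - γ t‖ ≥ c d_Γ(s,t)`; hence `0 ≤ K ≤ B := M² / c²` on `[0,L]²`.

For any kernel with values in `[0, B]` and i.i.d. samples, write the V-statistic as a centred
off-diagonal sum `S = ∑_{i ≠ j} (K(sᵢ, sⱼ) - E K)` plus a bias from the `m` missing diagonal
terms, of size at most `B / m`. Two summands of `S` whose index pairs are disjoint are
independent and centred, so `E S² ≤ 4 m³ B²`, and Chebyshev's inequality gives
`|S| ≤ 2 m² B / √(m δ)` with probability at least `1 - δ`; as `√(m δ) ≤ m`, the bias adds at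
most `B / √(m δ)` more.
-/

open MeasureTheory ProbabilityTheory Set Function
open scoped Classical

theorem LipschitzWith.dist_le_mul_min_of_periodic {α : Type*} [PseudoMetricSpace α]
    {G : ℝ → α} {K : NNReal} {L : ℝ} (hG : LipschitzWith K G) (hper : Periodic G L)
    {x y : ℝ} (hx : x ∈ Icc 0 L) (hy : y ∈ Icc 0 L) :
    dist (G x) (G y) ≤ K * min |x - y| (L - |x - y|) := by
  have hwrap : ∀ {x y : ℝ}, x ∈ Icc 0 L → y ∈ Icc 0 L → x ≤ y →
      dist (G x) (G y) ≤ K * (L - |x - y|) := by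
    intro x y hx hy hxy
    calc dist (G x) (G y) = dist (G (x + L)) (G y) := by rw [hper x]
      _ ≤ K * dist (x + L) y := hG.dist_le_mul _ _
      _ = K * (L - |x - y|) := by
        rw [Real.dist_eq, abs_of_nonneg (by linarith [hx.1, hy.2]), abs_of_nonpos (by linarith)]
        ring
  rw [mul_min_of_nonneg _ _ K.coe_nonneg]
  refine le_min (by simpa only [Real.dist_eq] using hG.dist_le_mul x y) ?_
  rcases le_total x y with hxy | hxy
  · exact hwrap hx hy hxy
  · rw [dist_comm, abs_sub_comm]
    exact hwrap hy hx hxy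

theorem sq_div_sq_le_of_abs_le_mul {a b c d M : ℝ} (hc : 0 < c) (hM : 0 ≤ M) (hb : 0 ≤ b)
    (ha : |a| ≤ M * d) (hcd : c * d ≤ b) : a ^ 2 / b ^ 2 ≤ M ^ 2 / c ^ 2 := by
  obtain rfl | hb := hb.eq_or_lt
  · simp only [ne_eq, OfNat.ofNat_ne_zero, not_false_eq_true, zero_pow, div_zero]
    positivity
  rw [← div_pow, ← div_pow, ← sq_abs]
  refine pow_le_pow_left₀ (abs_nonneg _) ?_ 2
  rw [abs_div, abs_of_pos hb, div_le_div_iff₀ hb hc]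
  calc |a| * c ≤ M * d * c := by gcongr
    _ = M * (c * d) := by ring
    _ ≤ M * b := by gcongr

theorem ofReal_one_sub_le_measure_abs_le {Ω : Type*} [MeasurableSpace Ω] {P : Measure Ω}
    [IsProbabilityMeasure P] {X : Ω → ℝ} (hX : Integrable (fun ω => X ω ^ 2) P) {V t : ℝ}
    (hV : ∫ ω, X ω ^ 2 ∂P ≤ V) (ht : 0 < t) :
    ENNReal.ofReal (1 - V / t ^ 2) ≤ P {ω | |X ω| ≤ t} := by
  have hmarkov : P.real {ω | t ^ 2 ≤ X ω ^ 2} ≤ V / t ^ 2 := by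
    rw [le_div_iff₀ (by positivity), mul_comm]
    exact (mul_meas_ge_le_integral_of_nonneg (.of_forall fun ω => sq_nonneg _) hX _).trans hV
  have htail : {ω | |X ω| ≤ t}ᶜ ⊆ {ω | t ^ 2 ≤ X ω ^ 2} := fun ω hω => by
    simp only [mem_compl_iff, mem_ofPred_eq, not_le] at hω ⊢
    nlinarith [sq_abs (X ω), abs_nonneg (X ω)]
  have hcover : 1 ≤ P.real {ω | |X ω| ≤ t} + P.real {ω | |X ω| ≤ t}ᶜ := by
    simpa [union_compl_self] using measureReal_union_le (μ := P) {ω | |X ω| ≤ t} {ω | |X ω| ≤ t}ᶜ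
  rw [← ofReal_measureReal]
  exact ENNReal.ofReal_le_ofReal (by linarith [measureReal_mono (μ := P) htail])

section VStatistic

variable {α : Type*} {m : ℕ}

noncomputable def vStatistic (f : α → α → ℝ) (x : Fin m → α) : ℝ :=
  ((m : ℝ) ^ 2)⁻¹ * ∑ i : Fin m, ∑ j : Fin m, if i = j then 0 else f (x i) (x j)

def pairDeviation (f : α → α → ℝ) (a : ℝ) (x : Fin m → α) (p : Fin m × Fin m) : ℝ :=
  if p.1 = p.2 then 0 else f (x p.1) (x p.2) - a

theorem abs_pairDeviation_le {f : α → α → ℝ} {a B : ℝ} (hf : ∀ u v, f u v ∈ Icc 0 B)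
    (ha : a ∈ Icc 0 B) (x : Fin m → α) (p : Fin m × Fin m) :
    |pairDeviation f a x p| ≤ B := by
  unfold pairDeviation
  split_ifs
  · simpa using ha.1.trans ha.2
  · have hfx := hf (x p.1) (x p.2)
    rw [abs_le]
    constructor <;> linarith [hfx.1, hfx.2, ha.1, ha.2]

theorem abs_pairDeviation_mul_le {f : α → α → ℝ} {a B : ℝ} (hf : ∀ u v, f u v ∈ Icc 0 B)
    (ha : a ∈ Icc 0 B) (x : Fin m → α) (p q : Fin m × Fin m) :
    |pairDeviation f a x p * pairDeviation f a x q| ≤ B * B := by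
  rw [abs_mul]
  exact mul_le_mul (abs_pairDeviation_le hf ha x p) (abs_pairDeviation_le hf ha x q)
    (abs_nonneg _) (ha.1.trans ha.2)

theorem vStatistic_sub_eq (hm : m ≠ 0) (f : α → α → ℝ) (a : ℝ) (x : Fin m → α) :
    vStatistic f x - a = ((m : ℝ) ^ 2)⁻¹ * ∑ p, pairDeviation f a x p - a / m := by
  have hdiag : ∑ p : Fin m × Fin m, (if p.1 = p.2 then 0 else a) = ((m : ℝ) ^ 2 - m) * a := by
    have : ∀ p : Fin m × Fin m, (if p.1 = p.2 then 0 else a) = a - if p.1 = p.2 then a else 0 :=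
      fun p => by split_ifs <;> ring
    simp only [this, Finset.sum_sub_distrib, Fintype.sum_prod_type, Finset.sum_ite_eq,
      Finset.mem_univ, if_true, Finset.sum_const, Finset.card_univ, Fintype.card_prod,
      Fintype.card_fin, nsmul_eq_mul]
    push_cast
    ring
  have hsplit : ∑ p, pairDeviation f a x p
      = ∑ i : Fin m, ∑ j : Fin m, (if i = j then 0 else f (x i) (x j)) - ((m : ℝ) ^ 2 - m) * a := by
    rw [← hdiag, ← Fintype.sum_prod_type', ← Finset.sum_sub_distrib]
    exact Finset.sum_congr rfl fun p _ => by unfold pairDeviation; split_ifs <;> ring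
  rw [vStatistic, hsplit]
  field_simp
  ring

theorem abs_sum_pairDeviation_le {f : α → α → ℝ} {a B : ℝ} (hf : ∀ u v, f u v ∈ Icc 0 B)
    (ha : a ∈ Icc 0 B) (x : Fin m → α) : |∑ p, pairDeviation f a x p| ≤ (m : ℝ) ^ 2 * B := by
  refine (Finset.abs_sum_le_sum_abs _ _).trans ?_
  refine (Finset.sum_le_sum fun p _ => abs_pairDeviation_le hf ha x p).trans_eq ?_
  simp [sq]

theorem abs_vStatistic_sub_le (hm : m ≠ 0) (f : α → α → ℝ) {a : ℝ} (ha : 0 ≤ a)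
    (x : Fin m → α) :
    |vStatistic f x - a| ≤ ((m : ℝ) ^ 2)⁻¹ * |∑ p, pairDeviation f a x p| + a / m := by
  rw [vStatistic_sub_eq hm]
  refine (abs_sub _ _).trans_eq ?_
  rw [abs_mul, abs_of_nonneg (by positivity), abs_of_nonneg (by positivity : 0 ≤ a / m)]

def sharedIndexCount (p q : Fin m × Fin m) : ℝ :=
  (if q.1 = p.1 then 1 else 0) + (if q.1 = p.2 then 1 else 0) +
    (if q.2 = p.1 then 1 else 0) + (if q.2 = p.2 then 1 else 0)

theorem one_le_sharedIndexCount {p q : Fin m × Fin m}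
    (h : ¬(p.1 ≠ q.1 ∧ p.1 ≠ q.2 ∧ p.2 ≠ q.1 ∧ p.2 ≠ q.2)) : 1 ≤ sharedIndexCount p q := by
  simp only [ne_eq, not_and_or, not_not] at h
  unfold sharedIndexCount
  rcases h with h | h | h | h <;> simp only [h, if_true] <;> split_ifs <;> norm_num

theorem sum_sum_sharedIndexCount (m : ℕ) :
    ∑ p : Fin m × Fin m, ∑ q : Fin m × Fin m, sharedIndexCount p q = 4 * (m : ℝ) ^ 3 := by
  have hfst : ∀ y : Fin m, ∑ q : Fin m × Fin m, (if q.1 = y then (1 : ℝ) else 0) = m :=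
    fun y => by rw [Fintype.sum_prod_type]; simp [apply_ite Finset.card]
  have hsnd : ∀ y : Fin m, ∑ q : Fin m × Fin m, (if q.2 = y then (1 : ℝ) else 0) = m :=
    fun y => by rw [Fintype.sum_prod_type]; simp
  simp only [sharedIndexCount, Finset.sum_add_distrib, hfst, hsnd, Finset.sum_const,
    Finset.card_univ, Fintype.card_prod, Fintype.card_fin, nsmul_eq_mul]
  push_cast
  ring

variable {Ω : Type*} [MeasurableSpace Ω] {P : Measure Ω} [IsProbabilityMeasure P]
  [MeasurableSpace α] {μ : Measure α}
  {f : α → α → ℝ} {B : ℝ} {s : Fin m → Ω → α}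

theorem measurable_pairDeviation (hf : Measurable (uncurry f)) (hs : ∀ i, Measurable (s i))
    (a : ℝ) (p : Fin m × Fin m) : Measurable fun ω => pairDeviation f a (s · ω) p := by
  unfold pairDeviation
  split_ifs
  · exact measurable_const
  · exact (hf.comp ((hs p.1).prodMk (hs p.2))).sub_const a

theorem integral_apply_pair_eq_integral_prod (hf : Measurable (uncurry f))
    (hs : ∀ i, Measurable (s i)) (hindep : iIndepFun s P) (hmap : ∀ i, P.map (s i) = μ)
    {i j : Fin m} (hij : i ≠ j) :
    ∫ ω, f (s i ω) (s j ω) ∂P = ∫ q, uncurry f q ∂(μ.prod μ) := by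
  have hpair : P.map (fun ω => (s i ω, s j ω)) = μ.prod μ := by
    rw [(indepFun_iff_map_prod_eq_prod_map_map (hs i).aemeasurable (hs j).aemeasurable).mp
      (hindep.indepFun hij), hmap i, hmap j]
  rw [← hpair, integral_map ((hs i).prodMk (hs j)).aemeasurable hf.aestronglyMeasurable]
  rfl

theorem integral_pairDeviation (hf : Measurable (uncurry f)) (hfB : ∀ u v, f u v ∈ Icc 0 B)
    (hs : ∀ i, Measurable (s i)) (hindep : iIndepFun s P) (hmap : ∀ i, P.map (s i) = μ)
    (p : Fin m × Fin m) :
    ∫ ω, pairDeviation f (∫ q, uncurry f q ∂(μ.prod μ)) (s · ω) p ∂P = 0 := by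
  unfold pairDeviation
  split_ifs with hp
  · exact integral_zero _ _
  have hint : Integrable (fun ω => f (s p.1 ω) (s p.2 ω)) P :=
    .of_bound (hf.comp ((hs p.1).prodMk (hs p.2))).aestronglyMeasurable B
      (.of_forall fun ω => (abs_of_nonneg (hfB _ _).1).trans_le (hfB _ _).2)
  rw [integral_sub hint (integrable_const _),
    integral_apply_pair_eq_integral_prod hf hs hindep hmap hp]
  simp

theorem integral_pairDeviation_mul_eq_zero (hf : Measurable (uncurry f))
    (hfB : ∀ u v, f u v ∈ Icc 0 B) (hs : ∀ i, Measurable (s i)) (hindep : iIndepFun s P)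
    (hmap : ∀ i, P.map (s i) = μ) {p q : Fin m × Fin m}
    (h11 : p.1 ≠ q.1) (h12 : p.1 ≠ q.2) (h21 : p.2 ≠ q.1) (h22 : p.2 ≠ q.2) :
    ∫ ω, pairDeviation f (∫ q, uncurry f q ∂(μ.prod μ)) (s · ω) p *
      pairDeviation f (∫ q, uncurry f q ∂(μ.prod μ)) (s · ω) q ∂P = 0 := by
  set a := ∫ q, uncurry f q ∂(μ.prod μ)
  by_cases hp : p.1 = p.2
  · simp [pairDeviation, hp]
  by_cases hq : q.1 = q.2
  · simp [pairDeviation, hq]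
  have hφ : Measurable fun x : α × α => f x.1 x.2 - a := hf.sub_const a
  have hind := ((hindep.indepFun_prodMk_prodMk hs p.1 p.2 q.1 q.2 h11 h12 h21 h22).comp hφ hφ)
  have hW : ∀ r : Fin m × Fin m, r.1 ≠ r.2 →
      (fun ω => pairDeviation f a (s · ω) r) = (fun x : α × α => f x.1 x.2 - a) ∘
        fun ω => (s r.1 ω, s r.2 ω) := fun r hr => by
    ext ω; simp [pairDeviation, hr]
  rw [← hW p hp, ← hW q hq] at hind
  rw [hind.integral_fun_mul_eq_mul_integral
    (measurable_pairDeviation hf hs a p).aestronglyMeasurable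
    (measurable_pairDeviation hf hs a q).aestronglyMeasurable,
    integral_pairDeviation hf hfB hs hindep hmap, zero_mul]

theorem integrable_uncurry_of_mem_Icc {ν : Measure (α × α)} [IsFiniteMeasure ν]
    (hf : Measurable (uncurry f)) (hfB : ∀ u v, f u v ∈ Icc 0 B) : Integrable (uncurry f) ν :=
  .of_bound hf.aestronglyMeasurable B
    (.of_forall fun q => (abs_of_nonneg (hfB q.1 q.2).1).trans_le (hfB q.1 q.2).2)

theorem integral_uncurry_mem_Icc [IsProbabilityMeasure μ] (hf : Measurable (uncurry f))
    (hfB : ∀ u v, f u v ∈ Icc 0 B) : ∫ q, uncurry f q ∂(μ.prod μ) ∈ Icc 0 B := by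
  refine ⟨integral_nonneg fun q => (hfB q.1 q.2).1, ?_⟩
  simpa using integral_mono (integrable_uncurry_of_mem_Icc (ν := μ.prod μ) hf hfB)
    (integrable_const B) fun q => (hfB q.1 q.2).2

theorem integrable_pairDeviation_mul [IsProbabilityMeasure μ] (hf : Measurable (uncurry f))
    (hfB : ∀ u v, f u v ∈ Icc 0 B) (hs : ∀ i, Measurable (s i)) (p q : Fin m × Fin m) :
    Integrable (fun ω => pairDeviation f (∫ q, uncurry f q ∂(μ.prod μ)) (s · ω) p *
      pairDeviation f (∫ q, uncurry f q ∂(μ.prod μ)) (s · ω) q) P := by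
  have ha := integral_uncurry_mem_Icc (μ := μ) hf hfB
  refine .of_bound ((measurable_pairDeviation hf hs _ p).mul
    (measurable_pairDeviation hf hs _ q)).aestronglyMeasurable (B * B)
    (.of_forall fun ω => abs_pairDeviation_mul_le hfB ha _ p q)

theorem integral_pairDeviation_mul_le [IsProbabilityMeasure μ] (hf : Measurable (uncurry f))
    (hfB : ∀ u v, f u v ∈ Icc 0 B) (hs : ∀ i, Measurable (s i)) (hindep : iIndepFun s P)
    (hmap : ∀ i, P.map (s i) = μ) (p q : Fin m × Fin m) :
    ∫ ω, pairDeviation f (∫ q, uncurry f q ∂(μ.prod μ)) (s · ω) p *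
      pairDeviation f (∫ q, uncurry f q ∂(μ.prod μ)) (s · ω) q ∂P
      ≤ B ^ 2 * sharedIndexCount p q := by
  by_cases hdisj : p.1 ≠ q.1 ∧ p.1 ≠ q.2 ∧ p.2 ≠ q.1 ∧ p.2 ≠ q.2
  · obtain ⟨h11, h12, h21, h22⟩ := hdisj
    rw [integral_pairDeviation_mul_eq_zero hf hfB hs hindep hmap h11 h12 h21 h22]
    unfold sharedIndexCount
    positivity
  have ha := integral_uncurry_mem_Icc (μ := μ) hf hfB
  calc _ ≤ ∫ _ω, B * B ∂P := integral_mono (integrable_pairDeviation_mul hf hfB hs p q)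
        (integrable_const _) fun ω => (le_abs_self _).trans (abs_pairDeviation_mul_le hfB ha _ p q)
    _ = B ^ 2 * 1 := by simp [sq]
    _ ≤ _ := by gcongr; exact one_le_sharedIndexCount hdisj

theorem integral_sq_sum_pairDeviation_le [IsProbabilityMeasure μ] (hf : Measurable (uncurry f))
    (hfB : ∀ u v, f u v ∈ Icc 0 B) (hs : ∀ i, Measurable (s i)) (hindep : iIndepFun s P)
    (hmap : ∀ i, P.map (s i) = μ) :
    ∫ ω, (∑ p, pairDeviation f (∫ q, uncurry f q ∂(μ.prod μ)) (s · ω) p) ^ 2 ∂P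
      ≤ 4 * (m : ℝ) ^ 3 * B ^ 2 := by
  have hint := integrable_pairDeviation_mul (P := P) (μ := μ) hf hfB hs
  calc _ = ∑ p, ∑ q, ∫ ω, pairDeviation f (∫ q, uncurry f q ∂(μ.prod μ)) (s · ω) p *
        pairDeviation f (∫ q, uncurry f q ∂(μ.prod μ)) (s · ω) q ∂P := by
        simp_rw [sq, Finset.sum_mul_sum]
        rw [integral_finsetSum _ fun p _ => integrable_finsetSum _ fun q _ => hint p q]
        exact Finset.sum_congr rfl fun p _ => integral_finsetSum _ fun q _ => hint p q
    _ ≤ ∑ p, ∑ q, B ^ 2 * sharedIndexCount p q :=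
        Finset.sum_le_sum fun p _ => Finset.sum_le_sum fun q _ =>
          integral_pairDeviation_mul_le hf hfB hs hindep hmap p q
    _ = 4 * (m : ℝ) ^ 3 * B ^ 2 := by
        simp_rw [← Finset.mul_sum]
        rw [sum_sum_sharedIndexCount]
        ring

theorem vStatistic_concentration [IsProbabilityMeasure μ] (hf : Measurable (uncurry f))
    (hfB : ∀ u v, f u v ∈ Icc 0 B) (hB : 0 ≤ B) (hs : ∀ i, Measurable (s i))
    (hindep : iIndepFun s P) (hmap : ∀ i, P.map (s i) = μ) (hm : 0 < m) {δ : ℝ}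
    (hδ0 : 0 < δ) (hδ1 : δ ≤ 1) :
    ENNReal.ofReal (1 - δ) ≤ P {ω | |vStatistic f (s · ω) - ∫ q, uncurry f q ∂(μ.prod μ)|
      ≤ 3 * B / √(m * δ)} := by
  obtain rfl | hB := hB.eq_or_lt
  · obtain rfl : f = fun _ _ => 0 := funext₂ fun u v => le_antisymm (hfB u v).2 (hfB u v).1
    simpa [vStatistic, uncurry_def] using hδ0.le
  set a := ∫ q, uncurry f q ∂(μ.prod μ)
  have ha := integral_uncurry_mem_Icc (μ := μ) hf hfB
  have hm1 : (1 : ℝ) ≤ m := by exact_mod_cast hm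
  set r := √(m * δ)
  have hr0 : 0 < r := Real.sqrt_pos.mpr (by positivity)
  have hr2 : r ^ 2 = m * δ := Real.sq_sqrt (by positivity)
  have hrm : r ≤ m := by
    rw [← Real.sqrt_mul_self (by positivity : (0 : ℝ) ≤ m)]
    exact Real.sqrt_le_sqrt (by nlinarith)
  set t := 2 * (m : ℝ) ^ 2 * B / r
  have hS2 : Integrable (fun ω => (∑ p, pairDeviation f a (s · ω) p) ^ 2) P :=
    .of_bound ((Finset.measurable_sum _ fun p _ =>
      measurable_pairDeviation hf hs a p).pow_const 2).aestronglyMeasurable (((m : ℝ) ^ 2 * B) ^ 2)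
      (.of_forall fun ω => by
        rw [Real.norm_eq_abs, abs_pow]
        exact pow_le_pow_left₀ (abs_nonneg _) (abs_sum_pairDeviation_le hfB ha _) 2)
  have hδt : 4 * (m : ℝ) ^ 3 * B ^ 2 / t ^ 2 = δ := by
    simp only [t, div_pow, hr2]
    field_simp
    ring
  have hcheb := ofReal_one_sub_le_measure_abs_le hS2
    (integral_sq_sum_pairDeviation_le hf hfB hs hindep hmap) (by positivity : 0 < t)
  rw [hδt] at hcheb
  refine hcheb.trans (measure_mono fun ω (hω : _ ≤ t) => ?_)
  calc |vStatistic f (s · ω) - a|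
      ≤ ((m : ℝ) ^ 2)⁻¹ * |∑ p, pairDeviation f a (s · ω) p| + a / m :=
        abs_vStatistic_sub_le hm.ne' f ha.1 _
    _ ≤ ((m : ℝ) ^ 2)⁻¹ * t + B / r := by
        gcongr
        exact ha.2
    _ = 3 * B / r := by
        simp only [t]
        field_simp
        ring

end VStatistic

section UniformIcc

noncomputable def uniformIcc (L : ℝ) : Measure ℝ :=
  (ENNReal.ofReal L)⁻¹ • volume.restrict (Icc 0 L)

variable {L : ℝ}

theorem isProbabilityMeasure_uniformIcc (hL : 0 < L) : IsProbabilityMeasure (uniformIcc L) := by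
  constructor
  rw [uniformIcc, Measure.smul_apply, Measure.restrict_apply MeasurableSet.univ, univ_inter,
    Real.volume_Icc, sub_zero, smul_eq_mul]
  exact ENNReal.inv_mul_cancel (by simpa using hL) ENNReal.ofReal_ne_top

theorem ae_mem_Icc_uniformIcc : ∀ᵐ x ∂uniformIcc L, x ∈ Icc 0 L :=
  Measure.ae_smul_measure (ae_restrict_mem measurableSet_Icc) _

theorem integral_uniformIcc (hL : 0 < L) (g : ℝ → ℝ) :
    ∫ x, g x ∂uniformIcc L = L⁻¹ * ∫ x in Icc 0 L, g x := by
  rw [uniformIcc, integral_smul_measure, ENNReal.toReal_inv, ENNReal.toReal_ofReal hL.le,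
    smul_eq_mul]

theorem integral_prod_uniformIcc (hL : 0 < L) {g : ℝ × ℝ → ℝ}
    (hg : Integrable g ((uniformIcc L).prod (uniformIcc L))) :
    ∫ q, g q ∂(uniformIcc L).prod (uniformIcc L)
      = (L ^ 2)⁻¹ * ∫ x in Icc 0 L, ∫ y in Icc 0 L, g (x, y) := by
  have := isProbabilityMeasure_uniformIcc hL
  simp only [integral_prod g hg, integral_uniformIcc hL, integral_const_mul]
  ring

theorem vStatistic_uniformIcc_concentration {Ω : Type*} [MeasurableSpace Ω] {P : Measure Ω}
    [IsProbabilityMeasure P] (hL : 0 < L) {k : ℝ → ℝ → ℝ}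
    (hk : Measurable (uncurry fun u v => k (projIcc 0 L hL.le u) (projIcc 0 L hL.le v)))
    {B : ℝ} (hkB : ∀ x ∈ Icc 0 L, ∀ y ∈ Icc 0 L, k x y ∈ Icc 0 B) (hB : 0 ≤ B)
    {m : ℕ} {s : Fin m → Ω → ℝ} (hs : ∀ i, Measurable (s i)) (hindep : iIndepFun s P)
    (hunif : ∀ i, P.map (s i) = uniformIcc L) (hm : 0 < m) {δ : ℝ} (hδ0 : 0 < δ)
    (hδ1 : δ ≤ 1) :
    ENNReal.ofReal (1 - δ) ≤ P {ω | |L ^ 2 * vStatistic k (s · ω)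
      - ∫ x in Icc 0 L, ∫ y in Icc 0 L, k x y| ≤ L ^ 2 * (3 * B / √(m * δ))} := by
  have := isProbabilityMeasure_uniformIcc hL
  -- Clamping to `[0, L]` gives a kernel that is measurable and bounded on all of `ℝ × ℝ`.
  set f : ℝ → ℝ → ℝ := fun u v => k (projIcc 0 L hL.le u) (projIcc 0 L hL.le v)
  have hfB : ∀ u v, f u v ∈ Icc 0 B := fun u v => hkB _ (projIcc 0 L _ u).2 _ (projIcc 0 L _ v).2
  have hfk : ∀ u ∈ Icc 0 L, ∀ v ∈ Icc 0 L, f u v = k u v := fun u hu v hv => by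
    simp [f, projIcc_of_mem _ hu, projIcc_of_mem _ hv]
  have hint : ∫ x in Icc 0 L, ∫ y in Icc 0 L, k x y
      = L ^ 2 * ∫ q, uncurry f q ∂(uniformIcc L).prod (uniformIcc L) := by
    rw [integral_prod_uniformIcc hL (integrable_uncurry_of_mem_Icc hk hfB),
      mul_inv_cancel_left₀ (by positivity)]
    exact setIntegral_congr_fun measurableSet_Icc fun x hx =>
      setIntegral_congr_fun measurableSet_Icc fun y hy => (hfk x hx y hy).symm
  have hsamples : ∀ᵐ ω ∂P, ∀ i, s i ω ∈ Icc 0 L := ae_all_iff.2 fun i =>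
    ae_of_ae_map (hs i).aemeasurable ((hunif i).symm ▸ ae_mem_Icc_uniformIcc)
  refine (vStatistic_concentration hk hfB hB hs hindep hunif hm hδ0 hδ1).trans
    (measure_mono_ae ?_)
  filter_upwards [hsamples] with ω hω hconc
  have hvk : vStatistic k (s · ω) = vStatistic f (s · ω) := by
    simp only [vStatistic, hfk _ (hω _) _ (hω _)]
  change |L ^ 2 * vStatistic k (s · ω) - _| ≤ _
  rw [hvk, hint, ← mul_sub, abs_mul, abs_of_nonneg (sq_nonneg L)]
  exact mul_le_mul_of_nonneg_left hconc (sq_nonneg L)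

end UniformIcc

section GagliardoKernel

variable {E : Type*} [SeminormedAddCommGroup E]

noncomputable def gagliardoKernel (G : ℝ → ℝ) (γ : ℝ → E) (u v : ℝ) : ℝ :=
  (G u - G v) ^ 2 / ‖γ u - γ v‖ ^ 2

theorem gagliardoKernel_nonneg (G : ℝ → ℝ) (γ : ℝ → E) (u v : ℝ) :
    0 ≤ gagliardoKernel G γ u v := by
  unfold gagliardoKernel; positivity

theorem gagliardoKernel_le {G : ℝ → ℝ} {γ : ℝ → E} {L c : ℝ} {M : NNReal} (hc : 0 < c)
    (hG : LipschitzWith M G) (hper : Periodic G L)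
    (hchord : ∀ x ∈ Icc 0 L, ∀ y ∈ Icc 0 L, c * min |x - y| (L - |x - y|) ≤ ‖γ x - γ y‖)
    {x y : ℝ} (hx : x ∈ Icc 0 L) (hy : y ∈ Icc 0 L) :
    gagliardoKernel G γ x y ≤ M ^ 2 / c ^ 2 := by
  refine sq_div_sq_le_of_abs_le_mul hc M.coe_nonneg (norm_nonneg _) ?_ (hchord x hx y hy)
  rw [← Real.dist_eq]
  exact hG.dist_le_mul_min_of_periodic hper hx hy

theorem measurable_gagliardoKernel_comp_projIcc {G : ℝ → ℝ} {γ : ℝ → E} {L : ℝ} (hL : 0 ≤ L)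
    (hG : Continuous G) (hγ : ContinuousOn γ (Icc 0 L)) :
    Measurable (uncurry fun u v =>
      gagliardoKernel G γ (projIcc 0 L hL u) (projIcc 0 L hL v)) := by
  have hclamp : Continuous fun u => (projIcc 0 L hL u : ℝ) :=
    continuous_subtype_val.comp continuous_projIcc
  have hGc := hG.comp hclamp
  have hγc := hγ.comp_continuous hclamp fun u => (projIcc 0 L hL u).2
  exact (((hGc.comp continuous_fst).sub (hGc.comp continuous_snd)).pow 2).measurable.div
    (((hγc.comp continuous_fst).sub (hγc.comp continuous_snd)).norm.pow 2).measurable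

end GagliardoKernel

theorem gagliardo_vstatistic_concentration_general
    {Ω : Type*} [MeasureSpace Ω] [IsProbabilityMeasure (ℙ : Measure Ω)]
    (L c M : ℝ) (hL : 0 < L) (hc : c ∈ Set.Ioc (0 : ℝ) 1)
    (γ : ℝ → EuclideanSpace ℝ (Fin 2))
    (hchord : ∀ s ∈ Set.Icc (0 : ℝ) L, ∀ t ∈ Set.Icc (0 : ℝ) L,
      c * min |s - t| (L - |s - t|) ≤ ‖γ s - γ t‖ ∧
      ‖γ s - γ t‖ ≤ min |s - t| (L - |s - t|))
    (G : ℝ → ℝ) (hGdiff : Differentiable ℝ G)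
    (hGper : ∀ s : ℝ, G (s + L) = G s)
    (hGderiv : ∀ s : ℝ, |deriv G s| ≤ M)
    (K : ℝ → ℝ → ℝ)
    (hK : ∀ s t, K s t =
      if γ s = γ t then 0 else (G s - G t) ^ 2 / ‖γ s - γ t‖ ^ 2)
    (I : ℝ)
    (hI : I = ∫ s in Set.Icc (0 : ℝ) L, ∫ t in Set.Icc (0 : ℝ) L, K s t)
    (m : ℕ) (hm : 2 ≤ m)
    (s : Fin m → Ω → ℝ) (hmeas : ∀ i, Measurable (s i))
    (hindep : iIndepFun s ℙ)
    (hunif : ∀ i, Measure.map (s i) ℙ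
      = (ENNReal.ofReal L)⁻¹ • volume.restrict (Set.Icc (0 : ℝ) L))
    (δ : ℝ) (hδ : δ ∈ Set.Ioo (0 : ℝ) 1) :
    ENNReal.ofReal (1 - δ) ≤
      ℙ {ω | |L ^ 2 * (((m : ℝ) ^ 2)⁻¹ *
              ∑ i : Fin m, ∑ j : Fin m, if i = j then 0 else K (s i ω) (s j ω)) - I|
            ≤ 3 * L ^ 2 * M ^ 2 / c ^ 2 / Real.sqrt (m * δ)} := by
  lift M to NNReal using (abs_nonneg _).trans (hGderiv 0)
  have hGlip : LipschitzWith M G :=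
    lipschitzWith_of_nnnorm_deriv_le hGdiff fun x => by exact_mod_cast hGderiv x
  obtain rfl : K = gagliardoKernel G γ := funext₂ fun u v => by
    rw [hK]; split_ifs with h <;> simp [gagliardoKernel, h]
  have hγ : ContinuousOn γ (Icc 0 L) := (LipschitzOnWith.of_dist_le_mul (K := 1)
    fun x hx y hy => by
      simpa [dist_eq_norm, Real.dist_eq] using (hchord x hx y hy).2.trans (min_le_left _ _)
    ).continuousOn
  have hconc := vStatistic_uniformIcc_concentration hL
    (measurable_gagliardoKernel_comp_projIcc hL.le hGdiff.continuous hγ)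
    (fun x hx y hy => ⟨gagliardoKernel_nonneg G γ x y,
      gagliardoKernel_le hc.1 hGlip hGper (fun x hx y hy => (hchord x hx y hy).1) hx hy⟩)
    (by positivity) hmeas hindep hunif (by omega) hδ.1 hδ.2.le
  rw [← hI] at hconc
  refine hconc.trans (measure_mono fun ω hω => ?_)
  rw [mem_ofPred_eq] at hω ⊢
  exact hω.trans_eq (by ring)

/-- Concentration of the Monte Carlo V-statistic approximation of the
Gagliardo double integral, for i.i.d. uniform samples on [0,L]. -/
theorem gagliardo_vstatistic_concentration
    {Ω : Type*} [MeasureSpace Ω] [IsProbabilityMeasure (ℙ : Measure Ω)]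
    (L c M : ℝ) (hL : 0 < L) (hc : c ∈ Set.Ioc (0 : ℝ) 1) (hM : 0 ≤ M)
    (γ : ℝ → EuclideanSpace ℝ (Fin 2))
    (hchord : ∀ s ∈ Set.Icc (0 : ℝ) L, ∀ t ∈ Set.Icc (0 : ℝ) L,
      c * min |s - t| (L - |s - t|) ≤ ‖γ s - γ t‖ ∧
      ‖γ s - γ t‖ ≤ min |s - t| (L - |s - t|))
    (hinj : ∀ s ∈ Set.Icc (0 : ℝ) L, ∀ t ∈ Set.Icc (0 : ℝ) L,
      0 < min |s - t| (L - |s - t|) → γ s ≠ γ t)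
    (G : ℝ → ℝ) (hGdiff : Differentiable ℝ G)
    (hGper : ∀ s : ℝ, G (s + L) = G s)
    (hGderiv : ∀ s : ℝ, |deriv G s| ≤ M)
    (K : ℝ → ℝ → ℝ)
    (hK : ∀ s t, K s t =
      if γ s = γ t then 0 else (G s - G t) ^ 2 / ‖γ s - γ t‖ ^ 2)
    (I : ℝ)
    (hI : I = ∫ s in Set.Icc (0 : ℝ) L, ∫ t in Set.Icc (0 : ℝ) L, K s t)
    (m : ℕ) (hm : 2 ≤ m)
    (s : Fin m → Ω → ℝ) (hmeas : ∀ i, Measurable (s i))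
    (hindep : iIndepFun s ℙ)
    (hunif : ∀ i, Measure.map (s i) ℙ
      = (ENNReal.ofReal L)⁻¹ • volume.restrict (Set.Icc (0 : ℝ) L))
    (δ : ℝ) (hδ : δ ∈ Set.Ioo (0 : ℝ) 1) :
    ENNReal.ofReal (1 - δ) ≤
      ℙ {ω | |L ^ 2 * (((m : ℝ) ^ 2)⁻¹ *
              ∑ i : Fin m, ∑ j : Fin m, if i = j then 0 else K (s i ω) (s j ω)) - I|
            ≤ 3 * L ^ 2 * M ^ 2 / c ^ 2 / Real.sqrt (m * δ)} :=
  gagliardo_vstatistic_concentration_general L c M hL hc γ hchord G hGdiff hGper hGderiv K hK I hI m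
    hm s hmeas hindep hunif δ hδ
end

section
/- Let Ω ⊂ ℝ² be a bounded measurable set with Lebesgue measure |Ω| > 0, and let x₁, …, x_m be independent random variables each distributed uniformly on Ω (law equal to the normalized restriction of Lebesgue measure to Ω). Let w : Ω → ℝ be measurable and essentially bounded with ‖w‖_{L²(Ω)} > 0, and define the discrete norm ‖w‖*² := (|Ω|/m) Σ_{i=1}^m |w(x_i)|². Then for every δ ∈ (0,1), with probability at least 1 − δ: | ‖w‖_{L²(Ω)} − ‖w‖* | ≤ |Ω|^{1/2} · ‖w‖_{L^∞(Ω)} · (mδ)^{−1/2}. -/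
/-!
Write `T := (|Ω|/m) Σᵢ w(xᵢ)²` for the Monte Carlo estimate of `I := ‖w‖²_{L²(Ω)}`. Each
sample `w(xᵢ)²` has mean `I/|Ω|` and second moment `|Ω|⁻¹ ∫_Ω w⁴ ≤ |Ω|⁻¹ ‖w‖²_∞ I`, so by
independence `E T = I` and `Var T ≤ |Ω| ‖w‖²_∞ I / m`. Chebyshev's inequality at the level
`c = √I · B`, with `B = |Ω|^{1/2} ‖w‖_∞ (mδ)^{-1/2}`, gives `|T - I| < c` with probability at
least `1 - δ`, and there `|√I - √T| ≤ |I - T| / √I ≤ B`.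
-/

open MeasureTheory ProbabilityTheory MeasureTheory.pdf
open scoped ENNReal

theorem abs_sqrt_sub_sqrt_le_of_abs_sub_le {a b B : ℝ} (ha : 0 < a) (hb : 0 ≤ b)
    (h : |b - a| ≤ √a * B) : |√a - √b| ≤ B := by
  refine le_of_mul_le_mul_left ?_ (Real.sqrt_pos.2 ha)
  calc √a * |√a - √b| ≤ (√a + √b) * |√a - √b| := by
        gcongr; exact le_add_of_nonneg_right (Real.sqrt_nonneg b)
    _ = |(√a + √b) * (√a - √b)| := by
        rw [abs_mul, abs_of_nonneg (by positivity : 0 ≤ √a + √b)]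
    _ = |b - a| := by
        rw [abs_sub_comm b]
        congr 1
        linear_combination Real.sq_sqrt ha.le - Real.sq_sqrt hb
    _ ≤ √a * B := h

section

variable {E Ω : Type*} [MeasurableSpace E] {μ : Measure E} {s : Set E}

theorem integral_sq_sq_le_of_ae_abs_le {f : E → ℝ} {L : ℝ} (hf : ∀ᵐ y ∂μ, |f y| ≤ L)
    (hint : Integrable (fun y => f y ^ 2) μ) :
    ∫ y, (f y ^ 2) ^ 2 ∂μ ≤ L ^ 2 * ∫ y, f y ^ 2 ∂μ := by
  rw [← integral_const_mul]
  refine integral_mono_of_nonneg (ae_of_all _ fun y => by positivity) (hint.const_mul _) ?_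
  filter_upwards [hf] with y hy
  have hsq : f y ^ 2 ≤ L ^ 2 := by
    rw [← sq_abs]
    exact pow_le_pow_left₀ (abs_nonneg _) hy 2
  rw [sq (f y ^ 2)]
  exact mul_le_mul_of_nonneg_right hsq (sq_nonneg _)

theorem lpNorm_pos_of_integral_sq_pos {f : E → ℝ} {p : ℝ≥0∞} (hf : MemLp f p μ) (hp : p ≠ 0)
    (h : 0 < ∫ y, f y ^ 2 ∂μ) : 0 < lpNorm f p μ :=
  lpNorm_nonneg.lt_of_ne fun h0 => h.ne' <| integral_eq_zero_of_ae <|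
    ((lpNorm_eq_zero hf hp).1 h0.symm).mono fun y hy => by simp [hy]

noncomputable def monteCarloEstimate {m : ℕ} (μ : Measure E) (s : Set E) (f : E → ℝ)
    (x : Fin m → Ω → E) (ω : Ω) : ℝ :=
  (μ s).toReal / m * ∑ i, f (x i ω)

theorem monteCarloEstimate_nonneg {m : ℕ} {f : E → ℝ} (hf : 0 ≤ f) (x : Fin m → Ω → E)
    (ω : Ω) : 0 ≤ monteCarloEstimate μ s f x ω :=
  mul_nonneg (by positivity) (Finset.sum_nonneg fun i _ => hf _)

variable [MeasurableSpace Ω] {P : Measure Ω}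

theorem ofReal_one_sub_le_measure_abs_sub_integral_lt [IsProbabilityMeasure P] {Y : Ω → ℝ}
    (hY : MemLp Y 2 P) {c δ : ℝ} (hc : 0 < c) (hvar : variance Y P ≤ δ * c ^ 2) :
    ENNReal.ofReal (1 - δ) ≤ P {ω | |Y ω - P[Y]| < c} := by
  have hδ : 0 ≤ δ := nonneg_of_mul_nonneg_left ((variance_nonneg Y P).trans hvar) (by positivity)
  have htail : P {ω | c ≤ |Y ω - P[Y]|} ≤ ENNReal.ofReal δ :=
    (meas_ge_le_variance_div_sq hY hc).trans
      (ENNReal.ofReal_le_ofReal ((div_le_iff₀ (by positivity)).2 hvar))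
  have hcompl : {ω | c ≤ |Y ω - P[Y]|}ᶜ = {ω | |Y ω - P[Y]| < c} := by
    ext ω; simp
  calc ENNReal.ofReal (1 - δ) = 1 - ENNReal.ofReal δ := by
        rw [ENNReal.ofReal_sub 1 hδ, ENNReal.ofReal_one]
    _ ≤ 1 - P {ω | c ≤ |Y ω - P[Y]|} := tsub_le_tsub_left htail 1
    _ ≤ P {ω | |Y ω - P[Y]| < c} := by
        rw [tsub_le_iff_left, ← hcompl, ← measure_univ (μ := P)]
        exact measure_univ_le_add_compl _

namespace MeasureTheory.pdf.IsUniform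

variable {X : Ω → E}

theorem memLp_comp (hns : μ s ≠ 0) (hnt : μ s ≠ ∞) (hu : IsUniform X s P μ) {g : E → ℝ}
    {p : ℝ≥0∞} (hg : MemLp g p (μ.restrict s)) : MemLp (fun ω => g (X ω)) p P := by
  refine MemLp.comp_of_map ?_ (hu.aemeasurable hns hnt)
  rw [hu]
  exact hg.smul_measure (ENNReal.inv_ne_top.2 hns)

theorem integral_comp (hns : μ s ≠ 0) (hnt : μ s ≠ ∞) (hu : IsUniform X s P μ) {g : E → ℝ}
    (hg : AEStronglyMeasurable g (μ.restrict s)) :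
    ∫ ω, g (X ω) ∂P = (μ s).toReal⁻¹ * ∫ y in s, g y ∂μ := by
  rw [← integral_map (hu.aemeasurable hns hnt) (hu ▸ hg.smul_measure _), hu,
    ProbabilityTheory.cond, integral_smul_measure, ENNReal.toReal_inv, smul_eq_mul]

end MeasureTheory.pdf.IsUniform

variable {m : ℕ} {f : E → ℝ} {x : Fin m → Ω → E}
  (hns : μ s ≠ 0) (hnt : μ s ≠ ∞) (hu : ∀ i, IsUniform (x i) s P μ)
include hns hnt hu

theorem memLp_monteCarloEstimate {p : ℝ≥0∞} (hf : MemLp f p (μ.restrict s)) :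
    MemLp (monteCarloEstimate μ s f x) p P :=
  (memLp_finsetSum _ fun i _ => (hu i).memLp_comp hns hnt hf).const_mul _

theorem integral_monteCarloEstimate (hm : m ≠ 0) (hf : Integrable f (μ.restrict s)) :
    ∫ ω, monteCarloEstimate μ s f x ω ∂P = ∫ y in s, f y ∂μ := by
  have hV : (μ s).toReal ≠ 0 := ENNReal.toReal_ne_zero.2 ⟨hns, hnt⟩
  have hsample : ∀ i, Integrable (fun ω => f (x i ω)) P := fun i =>
    memLp_one_iff_integrable.1 ((hu i).memLp_comp hns hnt (memLp_one_iff_integrable.2 hf))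
  simp only [monteCarloEstimate]
  rw [integral_const_mul, integral_finsetSum _ fun i _ => hsample i]
  simp only [(hu _).integral_comp hns hnt hf.1, Finset.sum_const, Finset.card_univ,
    Fintype.card_fin, nsmul_eq_mul]
  field_simp

theorem variance_monteCarloEstimate_le [IsProbabilityMeasure P] (hm : m ≠ 0)
    (hindep : iIndepFun x P) (hf : Measurable f) (hf2 : MemLp f 2 (μ.restrict s)) :
    variance (monteCarloEstimate μ s f x) P ≤ (μ s).toReal / m * ∫ y in s, f y ^ 2 ∂μ := by
  set V := (μ s).toReal
  have hV : V ≠ 0 := ENNReal.toReal_ne_zero.2 ⟨hns, hnt⟩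
  have hsum : variance (fun ω => ∑ i, f (x i ω)) P = ∑ i, variance (fun ω => f (x i ω)) P := by
    simpa only [Finset.sum_fn] using IndepFun.variance_sum (X := fun i ω => f (x i ω))
      (s := Finset.univ) (fun i _ => (hu i).memLp_comp hns hnt hf2)
      (fun i _ j _ hij => (hindep.indepFun hij).comp hf hf)
  have hsample : ∀ i, variance (fun ω => f (x i ω)) P ≤ V⁻¹ * ∫ y in s, f y ^ 2 ∂μ := fun i =>
    (variance_le_expectation_sq ((hu i).memLp_comp hns hnt hf2).1).trans_eq
      ((hu i).integral_comp hns hnt (hf.pow_const 2).aestronglyMeasurable)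
  calc variance (monteCarloEstimate μ s f x) P
      = (V / m) ^ 2 * ∑ i, variance (fun ω => f (x i ω)) P := by
        rw [← hsum]; exact variance_const_mul _ _ _
    _ ≤ (V / m) ^ 2 * ∑ _i : Fin m, V⁻¹ * ∫ y in s, f y ^ 2 ∂μ := by
        gcongr with i; exact hsample i
    _ = V / m * ∫ y in s, f y ^ 2 ∂μ := by
        simp only [Finset.sum_const, Finset.card_univ, Fintype.card_fin, nsmul_eq_mul]
        field_simp

end

theorem monte_carlo_L2_norm_concentration_general
    {Ω : Type*} [MeasureSpace Ω] [IsProbabilityMeasure (ℙ : Measure Ω)]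
    (D : Set (EuclideanSpace ℝ (Fin 2)))
    (hDbdd : Bornology.IsBounded D)
    (hDpos : 0 < volume D)
    (m : ℕ) (hm : 1 ≤ m)
    (x : Fin m → Ω → EuclideanSpace ℝ (Fin 2))
    (hindep : iIndepFun x ℙ)
    (hunif : ∀ i, Measure.map (x i) ℙ = (volume D)⁻¹ • volume.restrict D)
    (w : EuclideanSpace ℝ (Fin 2) → ℝ)
    (hw : Measurable w)
    (hwbdd : MemLp w ⊤ (volume.restrict D))
    (hwpos : 0 < ∫ y in D, (w y) ^ 2)
    (δ : ℝ) (hδ : δ ∈ Set.Ioo (0 : ℝ) 1) :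
    ENNReal.ofReal (1 - δ) ≤
      ℙ {ω | |Real.sqrt (∫ y in D, (w y) ^ 2)
              - Real.sqrt ((volume D).toReal / m * ∑ i : Fin m, (w (x i ω)) ^ 2)|
            ≤ Real.sqrt (volume D).toReal *
                (eLpNorm w ⊤ (volume.restrict D)).toReal / Real.sqrt (m * δ)} := by
  obtain ⟨hδ, -⟩ := hδ
  have hns : volume D ≠ 0 := hDpos.ne'
  have hnt : volume D ≠ ∞ := hDbdd.measure_lt_top.ne
  have hm0 : m ≠ 0 := by omega
  have : IsFiniteMeasure (volume.restrict D) := isFiniteMeasure_restrict.2 hnt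
  rw [toReal_eLpNorm hwbdd.1]
  set V := (volume D).toReal
  set L := lpNorm w ⊤ (volume.restrict D)
  set I := ∫ y in D, w y ^ 2
  set T := monteCarloEstimate volume D (fun y => w y ^ 2) x
  have hV : 0 < V := ENNReal.toReal_pos hns hnt
  have hwL : ∀ᵐ y ∂volume.restrict D, |w y| ≤ L := ae_le_lpNorm_exponent_top hwbdd
  have hL : 0 < L := lpNorm_pos_of_integral_sq_pos hwbdd (by simp) hwpos
  have hw2 : MemLp (fun y => w y ^ 2) ⊤ (volume.restrict D) := by
    simpa only [sq, Pi.mul_def] using hwbdd.mul hwbdd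
  have hET : ∫ ω, T ω = I := integral_monteCarloEstimate hns hnt hunif hm0 (hw2.integrable le_top)
  have hvar : variance T ℙ ≤ V / m * (L ^ 2 * I) :=
    (variance_monteCarloEstimate_le hns hnt hunif hm0 hindep (hw.pow_const 2)
      (hw2.mono_exponent le_top)).trans
      (by gcongr; exact integral_sq_sq_le_of_ae_abs_le hwL (hw2.integrable le_top))
  set B := √V * L / √(m * δ)
  have hc : 0 < √I * B := by positivity
  have hvarc : variance T ℙ ≤ δ * (√I * B) ^ 2 := by
    convert hvar using 1
    rw [mul_pow, div_pow, mul_pow, Real.sq_sqrt hwpos.le, Real.sq_sqrt hV.le,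
      Real.sq_sqrt (by positivity)]
    field_simp
  refine (ofReal_one_sub_le_measure_abs_sub_integral_lt
    (memLp_monteCarloEstimate hns hnt hunif (hw2.mono_exponent le_top)) hc hvarc).trans
    (measure_mono fun ω hω => ?_)
  rw [hET] at hω
  exact abs_sqrt_sub_sqrt_le_of_abs_sub_le hwpos
    (monteCarloEstimate_nonneg (fun y => sq_nonneg (w y)) x ω) hω.le

/-- Probabilistic discretisation of the L² norm under i.i.d. uniform sampling:
with probability at least 1 − δ the Monte Carlo norm is within
|Ω|^{1/2} ‖w‖_{L^∞} (mδ)^{-1/2} of the true L² norm. -/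
theorem monte_carlo_L2_norm_concentration
    {Ω : Type*} [MeasureSpace Ω] [IsProbabilityMeasure (ℙ : Measure Ω)]
    (D : Set (EuclideanSpace ℝ (Fin 2)))
    (hDmeas : MeasurableSet D) (hDbdd : Bornology.IsBounded D)
    (hDpos : 0 < volume D)
    (m : ℕ) (hm : 1 ≤ m)
    (x : Fin m → Ω → EuclideanSpace ℝ (Fin 2))
    (hmeas : ∀ i, Measurable (x i))
    (hindep : iIndepFun x ℙ)
    (hunif : ∀ i, Measure.map (x i) ℙ = (volume D)⁻¹ • volume.restrict D)
    (w : EuclideanSpace ℝ (Fin 2) → ℝ)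
    (hw : Measurable w)
    (hwbdd : MemLp w ⊤ (volume.restrict D))
    (hwpos : 0 < ∫ y in D, (w y) ^ 2)
    (δ : ℝ) (hδ : δ ∈ Set.Ioo (0 : ℝ) 1) :
    ENNReal.ofReal (1 - δ) ≤
      ℙ {ω | |Real.sqrt (∫ y in D, (w y) ^ 2)
              - Real.sqrt ((volume D).toReal / m * ∑ i : Fin m, (w (x i ω)) ^ 2)|
            ≤ Real.sqrt (volume D).toReal *
                (eLpNorm w ⊤ (volume.restrict D)).toReal / Real.sqrt (m * δ)} :=
  monte_carlo_L2_norm_concentration_general D hDbdd hDpos m hm x hindep hunif w hw hwbdd hwpos δ hδ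
end

section
/- Let L > 0, h > 0, and let γ : [0,L] → ℝ² be 1-Lipschitz. Then the set of grid indices (i,j) ∈ ℤ² such that the closed cell [i·h, (i+1)·h] × [j·h, (j+1)·h] intersects the image of γ is finite and has cardinality at most 9·(L/h + 1). -/
lemma coord_abs_le_dist (x y : EuclideanSpace ℝ (Fin 2)) (i : Fin 2) :
    |x i - y i| ≤ dist x y := by
  rw [EuclideanSpace.dist_eq]
  have h1 : |x i - y i| = Real.sqrt (dist (x i) (y i) ^ 2) := by
    rw [Real.sqrt_sq dist_nonneg, Real.dist_eq]
  rw [h1]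
  apply Real.sqrt_le_sqrt
  exact Finset.single_le_sum (f := fun j => dist (x j) (y j) ^ 2)
    (fun j _ => sq_nonneg _) (Finset.mem_univ i)

lemma idx_close (h x c : ℝ) (hh : 0 < h) (q : ℤ)
    (hq1 : (q:ℝ) * h ≤ x) (hq2 : x ≤ ((q:ℝ)+1) * h)
    (hxc : |x - c| ≤ h/2) :
    q - ⌊c / h⌋ ∈ Finset.Icc (-1:ℤ) 1 := by
  set a := ⌊c / h⌋ with ha
  rw [Finset.mem_Icc]
  have h1 : (a:ℝ) ≤ c / h := Int.floor_le _
  have h2 : c / h < (a:ℝ) + 1 := Int.lt_floor_add_one _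
  have hc1 : (a:ℝ) * h ≤ c := (le_div_iff₀ hh).mp h1
  have hc2 : c < ((a:ℝ) + 1) * h := (div_lt_iff₀ hh).mp h2
  have habs := abs_le.mp hxc
  constructor
  · have hq : ((a:ℝ) - 1/2) * h ≤ ((q:ℝ) + 1) * h := by nlinarith [habs.2]
    have : (a:ℝ) - 1/2 ≤ (q:ℝ) + 1 := le_of_mul_le_mul_right hq hh
    have : (a:ℝ) - 2 < (q:ℝ) := by linarith
    have : a - 2 < q := by exact_mod_cast this
    omega
  · have hq : (q:ℝ) * h ≤ ((a:ℝ) + 3/2) * h := by nlinarith [habs.1]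
    have : (q:ℝ) ≤ (a:ℝ) + 3/2 := le_of_mul_le_mul_right hq hh
    have : (q:ℝ) < (a:ℝ) + 2 := by linarith
    have : q < a + 2 := by exact_mod_cast this
    omega

/-- The closed axis-aligned grid cell of mesh size `h` with index `q ∈ ℤ × ℤ`. -/
def gridCell (h : ℝ) (q : ℤ × ℤ) : Set (EuclideanSpace ℝ (Fin 2)) :=
  {p | p 0 ∈ Set.Icc ((q.1 : ℝ) * h) (((q.1 : ℝ) + 1) * h) ∧
       p 1 ∈ Set.Icc ((q.2 : ℝ) * h) (((q.2 : ℝ) + 1) * h)}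

/-- The set of grid cells cut by a 1-Lipschitz curve of length L is finite,
with cardinality at most 9(L/h + 1). -/
theorem cut_cell_count
    (L h : ℝ) (hL : 0 < L) (hh : 0 < h)
    (γ : ℝ → EuclideanSpace ℝ (Fin 2))
    (hlip : LipschitzOnWith 1 γ (Set.Icc 0 L)) :
    {q : ℤ × ℤ | (gridCell h q ∩ γ '' Set.Icc 0 L).Nonempty}.Finite ∧
    ({q : ℤ × ℤ | (gridCell h q ∩ γ '' Set.Icc 0 L).Nonempty}.ncard : ℝ)
      ≤ 9 * (L / h + 1) := by
  set S := {q : ℤ × ℤ | (gridCell h q ∩ γ '' Set.Icc 0 L).Nonempty} with hS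
  set N : ℕ := ⌈L / h⌉₊ with hNdef
  have hN1 : 1 ≤ N := Nat.one_le_iff_ne_zero.mpr (by
    simp [hNdef, Nat.ceil_eq_zero, not_le]
    positivity)
  set s : ℕ → ℝ := fun k => min (((k:ℝ) + 1/2) * h) L with hsdef
  set g : ℕ × (ℤ × ℤ) → ℤ × ℤ := fun p =>
    (⌊γ (s p.1) 0 / h⌋ + p.2.1, ⌊γ (s p.1) 1 / h⌋ + p.2.2) with hgdef
  set F : Finset (ℤ × ℤ) :=
    (Finset.range N ×ˢ (Finset.Icc (-1:ℤ) 1 ×ˢ Finset.Icc (-1:ℤ) 1)).image g with hF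
  have hsub : S ⊆ ↑F := by
    rintro q ⟨p, ⟨hcell1, hcell2⟩, t, ht, rfl⟩
    obtain ⟨ht0, htL⟩ := ht
    -- choose the sample index
    set k : ℕ := min ⌊t / h⌋₊ (N - 1) with hk
    have hkN : k < N := lt_of_le_of_lt (min_le_right _ _) (by omega)
    have hkle : (k:ℝ) * h ≤ t := by
      have : (k:ℝ) ≤ t / h := by
        calc (k:ℝ) ≤ (⌊t / h⌋₊ : ℝ) := by exact_mod_cast min_le_left _ _
        _ ≤ t / h := Nat.floor_le (by positivity)
      calc (k:ℝ) * h ≤ (t/h) * h := by nlinarith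
      _ = t := by field_simp
    have htk : t ≤ ((k:ℝ) + 1) * h := by
      rcases le_or_gt (⌊t / h⌋₊) (N-1) with hc | hc
      · have hk' : k = ⌊t / h⌋₊ := by omega
        have := Nat.lt_succ_floor (t / h)
        have h2 : t / h < (⌊t / h⌋₊ : ℝ) + 1 := by
          exact_mod_cast Nat.lt_floor_add_one (t/h)
        rw [hk']
        calc t = (t/h) * h := by field_simp
        _ ≤ ((⌊t / h⌋₊:ℝ) + 1) * h := by nlinarith
      · -- then N ≤ ⌊t/h⌋ so t/h ≥ N, but t ≤ L ≤ N h
        have hk' : k = N - 1 := by omega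
        have hLN : L ≤ (N:ℝ) * h := by
          have : L / h ≤ (N:ℝ) := Nat.le_ceil _
          calc L = (L/h) * h := by field_simp
          _ ≤ (N:ℝ) * h := by nlinarith
        rw [hk']
        have : ((N - 1 : ℕ) : ℝ) + 1 = (N:ℝ) := by
          have : (1:ℕ) ≤ N := hN1
          push_cast [Nat.cast_sub this]
          ring
        rw [this]
        linarith
    have hsk_mem : s k ∈ Set.Icc (0:ℝ) L := by
      constructor
      · apply le_min (by positivity) (le_of_lt hL)
      · exact min_le_right _ _
    have hts : |t - s k| ≤ h / 2 := by
      rw [abs_le]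
      constructor
      · have : s k ≤ ((k:ℝ) + 1/2) * h := min_le_left _ _
        nlinarith
      · have h1 : t ≤ ((k:ℝ) + 1/2) * h + h/2 := by nlinarith
        have h2 : t ≤ L + h/2 := by linarith
        have : t ≤ min (((k:ℝ) + 1/2) * h) L + h/2 := by
          rcases min_cases (((k:ℝ) + 1/2) * h) L with ⟨he, _⟩ | ⟨he, _⟩ <;> rw [he] <;> linarith
        linarith [this]
    have hdist : dist (γ t) (γ (s k)) ≤ h / 2 := by
      have h0 := hlip.dist_le_mul t ⟨ht0, htL⟩ (s k) hsk_mem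
      calc dist (γ t) (γ (s k)) ≤ dist t (s k) := by simpa using h0
      _ = |t - s k| := Real.dist_eq t (s k)
      _ ≤ h/2 := hts
    have hco : ∀ i : Fin 2, |γ t i - γ (s k) i| ≤ h / 2 :=
      fun i => le_trans (coord_abs_le_dist (γ t) (γ (s k)) i) hdist
    have hd1 : q.1 - ⌊γ (s k) 0 / h⌋ ∈ Finset.Icc (-1:ℤ) 1 :=
      idx_close h (γ t 0) (γ (s k) 0) hh q.1 hcell1.1 hcell1.2 (hco 0)
    have hd2 : q.2 - ⌊γ (s k) 1 / h⌋ ∈ Finset.Icc (-1:ℤ) 1 :=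
      idx_close h (γ t 1) (γ (s k) 1) hh q.2 hcell2.1 hcell2.2 (hco 1)
    simp only [hF, Finset.coe_image, Set.mem_image, Finset.mem_coe, Finset.mem_product,
      Finset.mem_range]
    refine ⟨(k, (q.1 - ⌊γ (s k) 0 / h⌋, q.2 - ⌊γ (s k) 1 / h⌋)), ⟨hkN, hd1, hd2⟩, ?_⟩
    simp [hgdef]
  have hfin : S.Finite := Set.Finite.subset F.finite_toSet hsub
  refine ⟨hfin, ?_⟩
  have hcard : S.ncard ≤ F.card := by
    have := Set.ncard_le_ncard hsub F.finite_toSet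
    simpa [Set.ncard_coe_finset] using this
  have hFcard : F.card ≤ N * 9 := by
    calc F.card ≤ (Finset.range N ×ˢ (Finset.Icc (-1:ℤ) 1 ×ˢ Finset.Icc (-1:ℤ) 1)).card :=
      Finset.card_image_le
    _ = N * 9 := by simp [Finset.card_product]
  have hNle : (N:ℝ) ≤ L / h + 1 := by
    have := Nat.ceil_lt_add_one (le_of_lt (div_pos hL hh))
    linarith [this]
  calc (S.ncard : ℝ) ≤ ((N * 9 : ℕ) : ℝ) := by exact_mod_cast le_trans hcard hFcard
  _ = 9 * (N:ℝ) := by push_cast; ring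
  _ ≤ 9 * (L / h + 1) := by linarith
end
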